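/- arXiv:2308.12650 — 12 statements merged into one kernel-verified Lean document; each statement's English description precedes it below -/
import Mathlib

section
/- The inclusion F(ℝ₊ⁿ) ⊆ K holds if and only if β ≥ 1, where K = {(x,z) ∈ ℝ₊ⁿ × ℝ : z − z₀ ≤ (γ ∏_{i=1}^n xᵢ^{aᵢ})^{1/β}}. Equivalently: for every x ∈ ℝ₊ⁿ with ℓ ≤ f(x) ≤ u one has f(x) − z₀ ≤ (γ f(x))^{1/β}, if and only if β ≥ 1. -/
open Real Finset

/-!
Put `p = 1 / β` and `c = γ ^ p`, so that `(γ t) ^ p = c t ^ p`; `z₀` and `c` are exactly the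
coefficients for which `t ↦ c t ^ p + z₀` fixes `ℓ` and `u`. The diagonal points
`x = (t ^ p, …, t ^ p)` have `f x = t`, so the inclusion says `t ≤ c t ^ p + z₀` on `[ℓ, u]`.
For `β ≥ 1` the map `t ↦ t ^ p` is concave, so this function lies above its chord, the identity;
for `β < 1` it is strictly convex and the inequality fails at the midpoint `(ℓ + u) / 2`.
-/

lemma ConcaveOn.le_mul_add_of_endpoints {φ : ℝ → ℝ} {ℓ u c z₀ t : ℝ}
    (hφ : ConcaveOn ℝ (Set.Icc ℓ u) φ) (hc : 0 ≤ c)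
    (hℓ : c * φ ℓ + z₀ = ℓ) (hu : c * φ u + z₀ = u) (ht : t ∈ Set.Icc ℓ u) :
    t ≤ c * φ t + z₀ := by
  have hℓu : ℓ ≤ u := ht.1.trans ht.2
  have hconc : ConcaveOn ℝ (Set.Icc ℓ u) fun t ↦ c * φ t + z₀ - t :=
    ((hφ.smul hc).add_const z₀).sub (convexOn_id (convex_Icc ℓ u))
  have := hconc.ge_on_segment (Set.left_mem_Icc.2 hℓu) (Set.right_mem_Icc.2 hℓu)
    (by rwa [segment_eq_Icc hℓu])
  simp only [hℓ, hu, sub_self, min_self] at this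
  linarith

lemma StrictConvexOn.mul_add_midpoint_lt {φ : ℝ → ℝ} {ℓ u c z₀ : ℝ}
    (hφ : StrictConvexOn ℝ (Set.Icc ℓ u) φ) (hc : 0 < c) (hℓu : ℓ < u)
    (hℓ : c * φ ℓ + z₀ = ℓ) (hu : c * φ u + z₀ = u) :
    c * φ ((ℓ + u) / 2) + z₀ < (ℓ + u) / 2 := by
  have hmid : φ ((ℓ + u) / 2) < (φ ℓ + φ u) / 2 := by
    have := hφ.2 (Set.left_mem_Icc.2 hℓu.le) (Set.right_mem_Icc.2 hℓu.le) hℓu.ne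
      one_half_pos one_half_pos (add_halves 1)
    rw [show (ℓ + u) / 2 = 1 / 2 * ℓ + 1 / 2 * u by ring]
    simp only [smul_eq_mul] at this
    linarith
  linarith [mul_lt_mul_of_pos_left hmid hc]

lemma affine_interpolation_left {A B ℓ u : ℝ} (hAB : A ≠ B) :
    (u - ℓ) / (B - A) * A + (B * ℓ - A * u) / (B - A) = ℓ := by
  field_simp [sub_ne_zero.2 hAB.symm]; ring

lemma affine_interpolation_right {A B ℓ u : ℝ} (hAB : A ≠ B) :
    (u - ℓ) / (B - A) * B + (B * ℓ - A * u) / (B - A) = u := by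
  field_simp [sub_ne_zero.2 hAB.symm]; ring

lemma prod_rpow_rpow_one_div_sum {ι : Type*} [Fintype ι] (a : ι → ℝ) (ha : ∑ i, a i ≠ 0)
    {z : ℝ} (hz : 0 < z) : ∏ i, (z ^ (1 / ∑ i, a i)) ^ a i = z := by
  simp_rw [← rpow_mul hz.le]
  rw [← rpow_sum_of_pos hz, ← mul_sum, one_div_mul_cancel ha, rpow_one]

/-- `F(ℝ₊ⁿ) ⊆ K` if and only if `β ≥ 1`. -/
theorem F_subset_K_iff (n : ℕ) (hn : 2 ≤ n) (a : Fin n → ℝ) (ha : ∀ i, 0 < a i)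
    (ℓ u : ℝ) (hℓ : 0 < ℓ) (hℓu : ℓ < u)
    (β z₀ γ : ℝ) (hβ : β = ∑ i, a i)
    (hz₀ : z₀ = (u ^ (1 / β) * ℓ - ℓ ^ (1 / β) * u) / (u ^ (1 / β) - ℓ ^ (1 / β)))
    (hγ : γ = ((u - ℓ) / (u ^ (1 / β) - ℓ ^ (1 / β))) ^ β) :
    {xz : (Fin n → ℝ) × ℝ | (∀ k, 0 ≤ xz.1 k) ∧
        ℓ ≤ ∏ i, xz.1 i ^ a i ∧ (∏ i, xz.1 i ^ a i) ≤ u ∧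
        xz.2 = ∏ i, xz.1 i ^ a i} ⊆
      {xz : (Fin n → ℝ) × ℝ | (∀ k, 0 ≤ xz.1 k) ∧
        xz.2 - z₀ ≤ (γ * ∏ i, xz.1 i ^ a i) ^ (1 / β)}
    ↔ 1 ≤ β := by
  have hβpos : 0 < β := hβ ▸ sum_pos (fun i _ ↦ ha i) ⟨⟨0, by omega⟩, mem_univ _⟩
  have hAB : ℓ ^ (1 / β) < u ^ (1 / β) := rpow_lt_rpow hℓ.le hℓu (by positivity)
  set c := (u - ℓ) / (u ^ (1 / β) - ℓ ^ (1 / β))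
  have hc : 0 < c := div_pos (sub_pos.2 hℓu) (sub_pos.2 hAB)
  have hℓc : c * ℓ ^ (1 / β) + z₀ = ℓ := hz₀ ▸ affine_interpolation_left hAB.ne
  have huc : c * u ^ (1 / β) + z₀ = u := hz₀ ▸ affine_interpolation_right hAB.ne
  have hγc : ∀ z, 0 ≤ z → (γ * z) ^ (1 / β) = c * z ^ (1 / β) := fun z hz ↦ by
    rw [hγ, mul_rpow (by positivity) hz, ← rpow_mul hc.le, mul_one_div_cancel hβpos.ne', rpow_one]
  constructor
  · intro hsub
    by_contra! hβ1
    have hm : 0 < (ℓ + u) / 2 := by linarith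
    have hdiag : ∏ i, (((ℓ + u) / 2) ^ (1 / β)) ^ a i = (ℓ + u) / 2 :=
      hβ ▸ prod_rpow_rpow_one_div_sum a (hβ ▸ hβpos.ne') hm
    have hK := (hsub (a := (fun _ ↦ ((ℓ + u) / 2) ^ (1 / β), (ℓ + u) / 2))
      ⟨fun _ ↦ rpow_nonneg hm.le _, by rw [hdiag]; linarith, by rw [hdiag]; linarith,
        hdiag.symm⟩).2
    simp only [hdiag, hγc _ hm.le] at hK
    have hconv : StrictConvexOn ℝ (Set.Icc ℓ u) fun t : ℝ ↦ t ^ (1 / β) :=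
      (strictConvexOn_rpow ((one_lt_div hβpos).2 hβ1)).subset
        (Set.Icc_subset_Ici_iff hℓu.le |>.2 hℓ.le) (convex_Icc ℓ u)
    have := hconv.mul_add_midpoint_lt hc hℓu hℓc huc
    linarith
  · rintro hβ1 xz ⟨hx, hℓz, hzu, hz⟩
    refine ⟨hx, ?_⟩
    have hconc : ConcaveOn ℝ (Set.Icc ℓ u) fun t : ℝ ↦ t ^ (1 / β) :=
      (concaveOn_rpow (by positivity) ((div_le_one hβpos).2 hβ1)).subset
        (Set.Icc_subset_Ici_iff hℓu.le |>.2 hℓ.le) (convex_Icc ℓ u)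
    have := hconc.le_mul_add_of_endpoints hc.le hℓc huc ⟨hℓz, hzu⟩
    rw [hz, hγc _ (hℓ.le.trans hℓz)]
    linarith
end

section
/- If β ≥ 1, then the convex hull of F(ℝ₊ⁿ) equals {(x,z) ∈ ℝ₊ⁿ × ℝ : ℓ ≤ z ≤ u and z − z₀ ≤ (γ ∏_{i=1}^n xᵢ^{aᵢ})^{1/β}}. -/
/-!
With `w = a / β`, the weighted geometric mean `G x = ∏ xᵢ ^ wᵢ` is concave and positively
homogeneous of degree one on the orthant, and `f = G ^ β`. Put `c = γ ^ (1/β)`: the line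
`z = z₀ + c t` passes through `(ℓ ^ (1/β), ℓ)` and `(u ^ (1/β), u)`, and the right-hand side is
`{x ≥ 0, ℓ ≤ z ≤ u, z ≤ z₀ + c G x}`.

This set is convex since `G` is concave, and it contains the graph because `t ↦ z₀ + c t ^ (1/β)`
is concave for `β ≥ 1` and agrees with the identity at `ℓ` and `u`. Conversely, a point with
`z = z₀ + c G x` lies on the segment joining the two points of the graph on the ray through `x`
at the levels `ℓ` and `u`. A point with `z < z₀ + c G x` is moved both ways along `eᵢ - eⱼ`
for some `i ≠ j`: `G` vanishes where a coordinate does, so by the intermediate value theorem it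
reaches `(z - z₀) / c` on both sides, exhibiting the point as a convex combination of two points
of the first kind.
-/

open Real Finset

theorem add_smul_mem_segment {𝕜 E : Type*} [Field 𝕜] [LinearOrder 𝕜] [IsStrictOrderedRing 𝕜]
    [AddCommGroup E] [Module 𝕜 E] (p d : E) {s₁ s s₂ : 𝕜} (h₁ : s₁ ≤ s) (h₂ : s ≤ s₂) :
    p + s • d ∈ segment 𝕜 (p + s₁ • d) (p + s₂ • d) := by
  have h := Set.mem_image_of_mem (AffineMap.lineMap p (p + d))
    (show s ∈ segment 𝕜 s₁ s₂ by rw [segment_eq_Icc (h₁.trans h₂)]; exact ⟨h₁, h₂⟩)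
  simpa [image_segment, AffineMap.lineMap_apply_module', add_comm] using h

theorem ConcaveOn.self_le_of_mem_Icc {ψ : ℝ → ℝ} {a b z : ℝ} (hψ : ConcaveOn ℝ (Set.Icc a b) ψ)
    (ha : a ≤ ψ a) (hb : b ≤ ψ b) (hz : z ∈ Set.Icc a b) : z ≤ ψ z := by
  have hab := hz.1.trans hz.2
  have h := (hψ.sub (convexOn_id (convex_Icc a b))).ge_on_segment
    (Set.left_mem_Icc.2 hab) (Set.right_mem_Icc.2 hab) (by rwa [segment_eq_Icc hab])
  simp only [Pi.sub_apply, id] at h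
  linarith [le_min (sub_nonneg.2 ha) (sub_nonneg.2 hb)]

section WeightedGeomMean

variable {ι : Type*} [Fintype ι] {w : ι → ℝ}

-- The right-hand side is the tangent hyperplane at `m` of `x ↦ ∏ i, x i ^ w i`.
theorem prod_rpow_le_prod_rpow_mul_sum (hw : ∀ i, 0 ≤ w i) (hw1 : ∑ i, w i = 1)
    {m r : ι → ℝ} (hm : ∀ i, 0 < m i) (hr : ∀ i, 0 ≤ r i) :
    ∏ i, r i ^ w i ≤ (∏ i, m i ^ w i) * ∑ i, w i * (r i / m i) := by
  have hfactor : ∏ i, r i ^ w i = (∏ i, m i ^ w i) * ∏ i, (r i / m i) ^ w i := by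
    rw [← prod_mul_distrib]
    refine prod_congr rfl fun i _ => ?_
    rw [← mul_rpow (hm i).le (div_nonneg (hr i) (hm i).le), mul_div_cancel₀ _ (hm i).ne']
  rw [hfactor]
  gcongr
  · exact prod_nonneg fun i _ => rpow_nonneg (hm i).le _
  · exact geom_mean_le_arith_mean_weighted univ w _ (fun i _ => hw i) hw1
      fun i _ => div_nonneg (hr i) (hm i).le

theorem concaveOn_prod_rpow (hw : ∀ i, 0 < w i) (hw1 : ∑ i, w i = 1) :
    ConcaveOn ℝ (Set.Ici 0) fun x : ι → ℝ => ∏ i, x i ^ w i := by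
  refine ⟨convex_Ici 0, fun p hp q hq θ τ hθ hτ hθτ => ?_⟩
  set m := θ • p + τ • q
  have hmi : ∀ i, m i = θ * p i + τ * q i := fun _ => rfl
  simp only [smul_eq_mul]
  by_cases hm : ∀ i, 0 < m i
  · have hsum : θ * ∑ i, w i * (p i / m i) + τ * ∑ i, w i * (q i / m i) = 1 := by
      rw [mul_sum, mul_sum, ← sum_add_distrib, ← hw1]
      refine sum_congr rfl fun i _ => ?_
      field_simp [(hm i).ne']
      linear_combination -w i * hmi i
    have hp' := prod_rpow_le_prod_rpow_mul_sum (fun i => (hw i).le) hw1 hm hp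
    have hq' := prod_rpow_le_prod_rpow_mul_sum (fun i => (hw i).le) hw1 hm hq
    calc θ * ∏ i, p i ^ w i + τ * ∏ i, q i ^ w i
        ≤ θ * ((∏ i, m i ^ w i) * ∑ i, w i * (p i / m i)) +
            τ * ((∏ i, m i ^ w i) * ∑ i, w i * (q i / m i)) := by gcongr
      _ = ∏ i, m i ^ w i := by linear_combination (∏ i, m i ^ w i) * hsum
  · push Not at hm
    obtain ⟨i, hi⟩ := hm
    have hθp : θ * p i = 0 := by linarith [hmi i, mul_nonneg hθ (hp i), mul_nonneg hτ (hq i)]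
    have hτq : τ * q i = 0 := by linarith [hmi i, mul_nonneg hθ (hp i), mul_nonneg hτ (hq i)]
    have hvanish : ∀ {c : ℝ} {r : ι → ℝ}, c * r i = 0 → c * ∏ j, r j ^ w j = 0 := by
      intro c r h
      rcases mul_eq_zero.1 h with h | h
      · rw [h, zero_mul]
      · rw [prod_eq_zero (mem_univ i) (by simp [h, (hw i).ne']), mul_zero]
    rw [hvanish hθp, hvanish hτq, add_zero]
    exact prod_nonneg fun j _ =>
      rpow_nonneg (add_nonneg (mul_nonneg hθ (hp j)) (mul_nonneg hτ (hq j))) _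

theorem prod_rpow_smul {x : ι → ℝ} (hx : 0 ≤ x) {s : ℝ} (hs : 0 < s) :
    ∏ i, (s • x) i ^ w i = s ^ (∑ i, w i) * ∏ i, x i ^ w i := by
  simp only [Pi.smul_apply, smul_eq_mul, mul_rpow hs.le (hx _), prod_mul_distrib,
    rpow_sum_of_pos hs]

theorem prod_rpow_div_rpow {a x : ι → ℝ} (hx : 0 ≤ x) {β : ℝ} (hβ : β ≠ 0) :
    (∏ i, x i ^ (a i / β)) ^ β = ∏ i, x i ^ a i := by
  rw [← finsetProd_rpow _ _ fun i _ => rpow_nonneg (hx i) _]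
  exact prod_congr rfl fun i _ => by rw [← rpow_mul (hx i), div_mul_cancel₀ _ hβ]

theorem exists_mem_segment_prod_rpow_eq [Nontrivial ι] (hw : ∀ i, 0 < w i) {x : ι → ℝ}
    (hx : 0 ≤ x) {t : ℝ} (ht : 0 ≤ t) (htx : t ≤ ∏ i, x i ^ w i) :
    ∃ y₁ y₂ : ι → ℝ, 0 ≤ y₁ ∧ 0 ≤ y₂ ∧ ∏ i, y₁ i ^ w i = t ∧ ∏ i, y₂ i ^ w i = t ∧
      x ∈ segment ℝ y₁ y₂ := by
  classical
  obtain ⟨i, j, hij⟩ := exists_pair_ne ι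
  set d : ι → ℝ := Pi.single i 1 - Pi.single j 1
  set φ : ℝ → ℝ := fun s => ∏ k, (x + s • d) k ^ w k
  have hφ : Continuous φ :=
    continuous_finsetProd _ fun k _ => (continuous_rpow_const (hw k).le).comp (by fun_prop)
  have hnonneg : ∀ s ∈ Set.Icc (-x i) (x j), 0 ≤ x + s • d := by
    intro s hs k
    by_cases hki : k = i
    · subst hki; simpa [d, hij] using (show 0 ≤ x k + s by linarith [hs.1])
    by_cases hkj : k = j
    · subst hkj; simpa [d, Ne.symm hij] using (show 0 ≤ x k - s by linarith [hs.2])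
    simpa [d, hki, hkj] using hx k
  have hφi : φ (-x i) = 0 := prod_eq_zero (mem_univ i) (by simp [d, hij, (hw i).ne'])
  have hφj : φ (x j) = 0 := prod_eq_zero (mem_univ j) (by simp [d, Ne.symm hij, (hw j).ne'])
  have hφ0 : φ 0 = ∏ k, x k ^ w k := by simp [φ]
  obtain ⟨s₁, hs₁, hφs₁⟩ := intermediate_value_Icc (neg_nonpos.2 (hx i)) hφ.continuousOn
    (show t ∈ Set.Icc (φ (-x i)) (φ 0) from ⟨hφi ▸ ht, hφ0 ▸ htx⟩)
  obtain ⟨s₂, hs₂, hφs₂⟩ := intermediate_value_Icc' (hx j) hφ.continuousOn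
    (show t ∈ Set.Icc (φ (x j)) (φ 0) from ⟨hφj ▸ ht, hφ0 ▸ htx⟩)
  refine ⟨x + s₁ • d, x + s₂ • d, hnonneg _ ⟨hs₁.1, hs₁.2.trans (hx j)⟩,
    hnonneg _ ⟨(neg_nonpos.2 (hx i)).trans hs₂.1, hs₂.2⟩, hφs₁, hφs₂, ?_⟩
  simpa using add_smul_mem_segment x d hs₁.2 hs₂.1

end WeightedGeomMean

section MonomialGraph

variable {ι : Type*} [Fintype ι] {w : ι → ℝ} {β ℓ u z₀ c : ℝ}

def monomialGraph (w : ι → ℝ) (β ℓ u : ℝ) : Set ((ι → ℝ) × ℝ) :=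
  {p | 0 ≤ p.1 ∧ p.2 ∈ Set.Icc ℓ u ∧ p.2 = (∏ i, p.1 i ^ w i) ^ β}

theorem convexHull_monomialGraph_subset (hw : ∀ i, 0 < w i) (hw1 : ∑ i, w i = 1) (hβ : 1 ≤ β)
    (hℓ : 0 ≤ ℓ) (hc : 0 ≤ c) (hz₀ℓ : z₀ + c * ℓ ^ β⁻¹ = ℓ) (hz₀u : z₀ + c * u ^ β⁻¹ = u) :
    convexHull ℝ (monomialGraph w β ℓ u) ⊆
      {p | 0 ≤ p.1 ∧ p.2 ∈ Set.Icc ℓ u ∧ p.2 ≤ z₀ + c * ∏ i, p.1 i ^ w i} := by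
  refine convexHull_min ?_ ?_
  · rintro ⟨x, z⟩ ⟨hx, hz, hzx : z = (∏ i, x i ^ w i) ^ β⟩
    refine ⟨hx, hz, ?_⟩
    rw [hzx] at hz ⊢
    have hψ : ConcaveOn ℝ (Set.Icc ℓ u) fun r => z₀ + c * r ^ β⁻¹ :=
      (concaveOn_const z₀ (convex_Icc ℓ u)).add <| ((concaveOn_rpow (inv_nonneg.2 (by linarith))
        (inv_le_one_of_one_le₀ hβ)).smul hc).subset
        (Set.Icc_subset_Ici_self.trans (Set.Ici_subset_Ici.2 hℓ)) (convex_Icc ℓ u)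
    have hG : 0 ≤ ∏ i, x i ^ w i := prod_nonneg fun i _ => rpow_nonneg (hx i) _
    simpa [rpow_rpow_inv hG (by linarith : β ≠ 0)] using
      hψ.self_le_of_mem_Icc hz₀ℓ.ge hz₀u.ge hz
  · have hG := ((concaveOn_const z₀ (convex_Ici 0)).add
      ((concaveOn_prod_rpow hw hw1).smul hc)).convex_hypograph
    rintro p ⟨hp, hpℓu, hpG⟩ q ⟨hq, hqℓu, hqG⟩ a b ha hb hab
    obtain ⟨hpq, hpqG⟩ := hG ⟨hp, hpG⟩ ⟨hq, hqG⟩ ha hb hab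
    exact ⟨hpq, convex_Icc ℓ u hpℓu hqℓu ha hb hab, hpqG⟩

theorem mem_convexHull_monomialGraph_of_prod_rpow_eq (hw1 : ∑ i, w i = 1) (hβ : β ≠ 0)
    (hℓ : 0 < ℓ) (hℓu : ℓ ≤ u) (hz₀ℓ : z₀ + c * ℓ ^ β⁻¹ = ℓ) (hz₀u : z₀ + c * u ^ β⁻¹ = u) {y : ι → ℝ}
    (hy : 0 ≤ y) {t : ℝ} (ht : t ∈ Set.Icc (ℓ ^ β⁻¹) (u ^ β⁻¹)) (hyt : ∏ i, y i ^ w i = t) :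
    (y, z₀ + c * t) ∈ convexHull ℝ (monomialGraph w β ℓ u) := by
  have ht0 : 0 < t := (rpow_pos_of_pos hℓ _).trans_le ht.1
  -- the line `s ↦ (s • t⁻¹ • y, z₀ + c * s)` meets the graph at `s = ℓ ^ β⁻¹` and `s = u ^ β⁻¹`
  have hmem : ∀ r ∈ Set.Icc ℓ u, (r ^ β⁻¹ • t⁻¹ • y, r) ∈ monomialGraph w β ℓ u := by
    intro r hr
    have hr0 : 0 < r := hℓ.trans_le hr.1
    refine ⟨smul_nonneg (by positivity) (smul_nonneg (by positivity) hy), hr, ?_⟩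
    rw [smul_smul, prod_rpow_smul hy (by positivity), hw1, rpow_one, hyt,
      inv_mul_cancel_right₀ ht0.ne', rpow_inv_rpow hr0.le hβ]
  have hseg := add_smul_mem_segment ((0 : ι → ℝ), z₀) (t⁻¹ • y, c) ht.1 ht.2
  simp only [Prod.smul_mk, Prod.mk_add_mk, zero_add, smul_eq_mul, smul_inv_smul₀ ht0.ne'] at hseg
  rw [mul_comm (ℓ ^ β⁻¹), mul_comm (u ^ β⁻¹), mul_comm t, hz₀ℓ, hz₀u] at hseg
  exact (convex_convexHull ℝ _).segment_subset (subset_convexHull ℝ _ (hmem ℓ ⟨le_rfl, hℓu⟩))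
    (subset_convexHull ℝ _ (hmem u ⟨hℓu, le_rfl⟩)) hseg

theorem subset_convexHull_monomialGraph [Nontrivial ι] (hw : ∀ i, 0 < w i)
    (hw1 : ∑ i, w i = 1) (hβ : β ≠ 0) (hℓ : 0 < ℓ) (hℓu : ℓ ≤ u) (hc : 0 < c)
    (hz₀ℓ : z₀ + c * ℓ ^ β⁻¹ = ℓ) (hz₀u : z₀ + c * u ^ β⁻¹ = u) :
    {p | 0 ≤ p.1 ∧ p.2 ∈ Set.Icc ℓ u ∧ p.2 ≤ z₀ + c * ∏ i, p.1 i ^ w i} ⊆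
      convexHull ℝ (monomialGraph w β ℓ u) := by
  rintro ⟨x, z⟩ ⟨hx, hz, hzx⟩
  set t := (z - z₀) / c
  have hzt : z = z₀ + c * t := by simp only [t]; field_simp; ring
  have ht : t ∈ Set.Icc (ℓ ^ β⁻¹) (u ^ β⁻¹) := by
    constructor
    · rw [le_div_iff₀' hc]; linarith [hz.1]
    · rw [div_le_iff₀' hc]; linarith [hz.2]
  have htx : t ≤ ∏ i, x i ^ w i := by
    rw [div_le_iff₀' hc]; linarith
  obtain ⟨y₁, y₂, hy₁, hy₂, hy₁t, hy₂t, hseg⟩ := exists_mem_segment_prod_rpow_eq hw hx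
    ((rpow_nonneg hℓ.le _).trans ht.1) htx
  rw [hzt]
  refine (convex_convexHull ℝ _).segment_subset
    (mem_convexHull_monomialGraph_of_prod_rpow_eq hw1 hβ hℓ hℓu hz₀ℓ hz₀u hy₁ ht hy₁t)
    (mem_convexHull_monomialGraph_of_prod_rpow_eq hw1 hβ hℓ hℓu hz₀ℓ hz₀u hy₂ ht hy₂t) ?_
  rw [← Prod.image_mk_segment_left]
  exact Set.mem_image_of_mem _ hseg

theorem convexHull_monomialGraph [Nontrivial ι] (hw : ∀ i, 0 < w i) (hw1 : ∑ i, w i = 1)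
    (hβ : 1 ≤ β) (hℓ : 0 < ℓ) (hℓu : ℓ < u) (hz₀ℓ : z₀ + c * ℓ ^ β⁻¹ = ℓ)
    (hz₀u : z₀ + c * u ^ β⁻¹ = u) :
    convexHull ℝ (monomialGraph w β ℓ u) =
      {p | 0 ≤ p.1 ∧ p.2 ∈ Set.Icc ℓ u ∧ p.2 ≤ z₀ + c * ∏ i, p.1 i ^ w i} := by
  have hLU : ℓ ^ β⁻¹ < u ^ β⁻¹ := rpow_lt_rpow hℓ.le hℓu (by positivity)
  have hc : 0 < c := by
    refine (mul_pos_iff_of_pos_right (sub_pos.2 hLU)).1 ?_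
    linarith
  exact (convexHull_monomialGraph_subset hw hw1 hβ hℓ.le hc.le hz₀ℓ hz₀u).antisymm
    (subset_convexHull_monomialGraph hw hw1 (by positivity) hℓ hℓu.le hc hz₀ℓ hz₀u)

theorem setOf_graph_prod_rpow_eq_monomialGraph {a : ι → ℝ} (hβ : β ≠ 0) :
    {xz : (ι → ℝ) × ℝ | (∀ k, 0 ≤ xz.1 k) ∧
      ℓ ≤ ∏ i, xz.1 i ^ a i ∧ (∏ i, xz.1 i ^ a i) ≤ u ∧ xz.2 = ∏ i, xz.1 i ^ a i} =
      monomialGraph (fun i => a i / β) β ℓ u := by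
  ext ⟨x, z⟩
  simp only [monomialGraph, Set.mem_ofPred_eq, Set.mem_Icc, ← Pi.le_def]
  refine and_congr_right fun hx => ?_
  rw [prod_rpow_div_rpow hx hβ]
  grind

theorem setOf_sub_le_rpow_prod_rpow_eq {a : ι → ℝ} (hβ : β ≠ 0) (hc : 0 ≤ c) :
    {xz : (ι → ℝ) × ℝ | (∀ k, 0 ≤ xz.1 k) ∧
      ℓ ≤ xz.2 ∧ xz.2 ≤ u ∧ xz.2 - z₀ ≤ (c ^ β * ∏ i, xz.1 i ^ a i) ^ β⁻¹} =
      {p | 0 ≤ p.1 ∧ p.2 ∈ Set.Icc ℓ u ∧ p.2 ≤ z₀ + c * ∏ i, p.1 i ^ (a i / β)} := by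
  ext ⟨x, z⟩
  simp only [Set.mem_ofPred_eq, Set.mem_Icc, ← Pi.le_def]
  refine and_congr_right fun hx => ?_
  have hG : 0 ≤ ∏ i, x i ^ (a i / β) := prod_nonneg fun i _ => rpow_nonneg (hx i) _
  rw [← prod_rpow_div_rpow hx hβ, ← mul_rpow (by positivity) (by positivity),
    rpow_rpow_inv (by positivity) hβ, sub_le_iff_le_add']
  grind

end MonomialGraph

/-- If `β ≥ 1`, then `conv(F(ℝ₊ⁿ)) = K ∩ S`. -/
theorem convexHull_F_eq_of_one_le_beta (n : ℕ) (hn : 2 ≤ n) (a : Fin n → ℝ)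
    (ha : ∀ i, 0 < a i) (ℓ u : ℝ) (hℓ : 0 < ℓ) (hℓu : ℓ < u)
    (β z₀ γ : ℝ) (hβ : β = ∑ i, a i) (hβ1 : 1 ≤ β)
    (hz₀ : z₀ = (u ^ (1 / β) * ℓ - ℓ ^ (1 / β) * u) / (u ^ (1 / β) - ℓ ^ (1 / β)))
    (hγ : γ = ((u - ℓ) / (u ^ (1 / β) - ℓ ^ (1 / β))) ^ β) :
    convexHull ℝ
      {xz : (Fin n → ℝ) × ℝ | (∀ k, 0 ≤ xz.1 k) ∧
        ℓ ≤ ∏ i, xz.1 i ^ a i ∧ (∏ i, xz.1 i ^ a i) ≤ u ∧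
        xz.2 = ∏ i, xz.1 i ^ a i} =
    {xz : (Fin n → ℝ) × ℝ | (∀ k, 0 ≤ xz.1 k) ∧
        ℓ ≤ xz.2 ∧ xz.2 ≤ u ∧
        xz.2 - z₀ ≤ (γ * ∏ i, xz.1 i ^ a i) ^ (1 / β)} := by
  simp only [one_div] at hz₀ hγ ⊢
  have hβ0 : 0 < β := by linarith
  have : Nontrivial (Fin n) := Fin.nontrivial_iff_two_le.2 hn
  set c := (u - ℓ) / (u ^ β⁻¹ - ℓ ^ β⁻¹)
  have hUL : 0 < u ^ β⁻¹ - ℓ ^ β⁻¹ := sub_pos.2 (rpow_lt_rpow hℓ.le hℓu (by positivity))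
  have hz₀ℓ : z₀ + c * ℓ ^ β⁻¹ = ℓ := by rw [hz₀]; simp only [c]; field_simp [hUL.ne']; ring
  have hz₀u : z₀ + c * u ^ β⁻¹ = u := by rw [hz₀]; simp only [c]; field_simp [hUL.ne']; ring
  have hw1 : ∑ i, a i / β = 1 := by rw [← sum_div, ← hβ, div_self hβ0.ne']
  rw [hγ, setOf_graph_prod_rpow_eq_monomialGraph hβ0.ne',
    setOf_sub_le_rpow_prod_rpow_eq hβ0.ne' (div_pos (by linarith) hUL).le]
  exact convexHull_monomialGraph (fun i => div_pos (ha i) hβ0) hw1 hβ1 hℓ hℓu hz₀ℓ hz₀u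
end

section
/- If β ≤ 1, then the convex hull of F(ℝ₊ⁿ) equals {(x,z) ∈ ℝ₊ⁿ × ℝ : ℓ ≤ z ≤ u and z ≤ ∏_{i=1}^n xᵢ^{aᵢ}}. -/
/-!
Weighted AM–GM with the slack weight `1 - ∑ aᵢ` shows that `f x = ∏ xᵢ ^ aᵢ` is concave on the
nonnegative orthant when `∑ aᵢ ≤ 1`, so the right-hand side is convex and contains the graph.
Conversely, let `0 < z ≤ f x` and follow the line `x + d • (eᵢ - eⱼ)` through two distinct
coordinates: `f` vanishes at both ends of its part in the orthant (where `xᵢ` or `xⱼ` reaches `0`),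
so by the intermediate value theorem it takes the value `z` on either side of `x`, and `(x, z)`
lies on the segment joining two points of the graph at height `z`.
-/

open Real Finset Set

theorem mem_segment_add_smul {E : Type*} [AddCommGroup E] [Module ℝ E] (x v : E) {s t : ℝ}
    (hs : s ≤ 0) (ht : 0 ≤ t) : x ∈ segment ℝ (x + s • v) (x + t • v) := by
  have h0 : (0 : ℝ) ∈ segment ℝ s t := by rw [segment_eq_Icc (hs.trans ht)]; exact ⟨hs, ht⟩
  have := mem_image_of_mem (AffineMap.lineMap x (x + v)) h0
  rw [image_segment] at this
  simpa [AffineMap.lineMap_apply, add_comm] using this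

theorem exists_mem_segment_eq_of_le {E : Type*} [AddCommGroup E] [Module ℝ E] (f : E → ℝ)
    {x v : E} {b c z : ℝ} (hb : 0 ≤ b) (hc : 0 ≤ c)
    (hf : ContinuousOn (fun d : ℝ => f (x + d • v)) (Icc (-b) c)) (hx : z ≤ f x)
    (hb' : f (x + (-b) • v) ≤ z) (hc' : f (x + c • v) ≤ z) :
    ∃ s ∈ Icc (-b) c, ∃ t ∈ Icc (-b) c,
      f (x + s • v) = z ∧ f (x + t • v) = z ∧ x ∈ segment ℝ (x + s • v) (x + t • v) := by
  have hb0 : -b ≤ 0 := neg_nonpos.2 hb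
  obtain ⟨s, ⟨hs₁, hs₂⟩, hs⟩ := intermediate_value_Icc hb0
    (hf.mono (Icc_subset_Icc le_rfl hc)) ⟨hb', by simpa using hx⟩
  obtain ⟨t, ⟨ht₁, ht₂⟩, ht⟩ := intermediate_value_Icc' hc
    (hf.mono (Icc_subset_Icc hb0 le_rfl)) ⟨hc', by simpa using hx⟩
  exact ⟨s, ⟨hs₁, hs₂.trans hc⟩, t, ⟨hb0.trans ht₁, ht₂⟩, hs, ht,
    mem_segment_add_smul x v hs₂ ht₁⟩

section

variable {ι : Type*} [Fintype ι] {a : ι → ℝ}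

theorem prod_rpow_le_one_sub_sum_add_sum_mul {w p : ι → ℝ}
    (hw : ∀ i, 0 ≤ w i) (hw₁ : ∑ i, w i ≤ 1) (hp : ∀ i, 0 ≤ p i) :
    ∏ i, p i ^ w i ≤ (1 - ∑ i, w i) + ∑ i, w i * p i := by
  have := geom_mean_le_arith_mean_weighted (univ : Finset (Option ι))
    (fun o => o.elim (1 - ∑ i, w i) w) (fun o => o.elim 1 p)
    (fun o _ => o.rec (by simpa using hw₁) hw)
    (by simp [Fintype.sum_option]) (fun o _ => o.rec zero_le_one hp)
  simpa [Fintype.prod_option, Fintype.sum_option] using this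

theorem prod_rpow_le_mul_prod_rpow (ha : ∀ i, 0 ≤ a i) (hβ : ∑ i, a i ≤ 1) {d v : ι → ℝ}
    (hd : ∀ i, 0 < d i) (hv : ∀ i, 0 ≤ v i) :
    ∏ i, v i ^ a i ≤ ((1 - ∑ i, a i) + ∑ i, a i * (v i / d i)) * ∏ i, d i ^ a i := by
  calc ∏ i, v i ^ a i = (∏ i, (v i / d i) ^ a i) * ∏ i, d i ^ a i := by
        rw [← prod_mul_distrib]
        refine prod_congr rfl fun i _ => ?_
        rw [div_rpow (hv i) (hd i).le, div_mul_cancel₀ _ (rpow_pos_of_pos (hd i) _).ne']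
    _ ≤ _ := by
        gcongr
        · exact prod_nonneg fun i _ => (rpow_pos_of_pos (hd i) _).le
        · exact prod_rpow_le_one_sub_sum_add_sum_mul ha hβ fun i => div_nonneg (hv i) (hd i).le

theorem prod_rpow_eq_zero (ha : ∀ i, 0 < a i) {x : ι → ℝ} {i : ι} (hx : x i = 0) :
    ∏ k, x k ^ a k = 0 :=
  prod_eq_zero (mem_univ i) (by rw [hx, zero_rpow (ha i).ne'])

theorem mul_prod_rpow_eq_zero (ha : ∀ i, 0 < a i) {t : ℝ} {x : ι → ℝ} {i : ι}
    (h : t * x i = 0) : t * ∏ k, x k ^ a k = 0 := by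
  rcases mul_eq_zero.1 h with rfl | hx
  · exact zero_mul _
  · rw [prod_rpow_eq_zero ha hx, mul_zero]

theorem concaveOn_prod_rpow_s3 (ha : ∀ i, 0 < a i) (hβ : ∑ i, a i ≤ 1) :
    ConcaveOn ℝ {x : ι → ℝ | ∀ i, 0 ≤ x i} fun x => ∏ i, x i ^ a i := by
  have hconv : Convex ℝ {x : ι → ℝ | ∀ i, 0 ≤ x i} := convex_Ici (0 : ι → ℝ)
  refine ⟨hconv, fun x hx y hy t s ht hs hts => ?_⟩
  simp only [smul_eq_mul]
  set d := t • x + s • y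
  have hd : ∀ i, d i = t * x i + s * y i := fun i => rfl
  have hd_nonneg : ∀ i, 0 ≤ d i := hconv hx hy ht hs hts
  by_cases hd_pos : ∀ i, 0 < d i
  · have hsum : t * ∑ i, a i * (x i / d i) + s * ∑ i, a i * (y i / d i) = ∑ i, a i := by
      rw [mul_sum, mul_sum, ← sum_add_distrib]
      refine sum_congr rfl fun i _ => ?_
      have := (hd_pos i).ne'
      rw [hd] at this ⊢
      field_simp
    calc t * ∏ i, x i ^ a i + s * ∏ i, y i ^ a i
        ≤ t * (((1 - ∑ i, a i) + ∑ i, a i * (x i / d i)) * ∏ i, d i ^ a i)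
          + s * (((1 - ∑ i, a i) + ∑ i, a i * (y i / d i)) * ∏ i, d i ^ a i) := by
          gcongr
          · exact prod_rpow_le_mul_prod_rpow (fun i => (ha i).le) hβ hd_pos hx
          · exact prod_rpow_le_mul_prod_rpow (fun i => (ha i).le) hβ hd_pos hy
      _ = ((t + s) * (1 - ∑ i, a i) + (t * ∑ i, a i * (x i / d i)
          + s * ∑ i, a i * (y i / d i))) * ∏ i, d i ^ a i := by ring
      _ = ∏ i, d i ^ a i := by rw [hsum, hts]; ring
  · obtain ⟨i, hi⟩ := not_forall.1 hd_pos
    have hdi : t * x i + s * y i = 0 := le_antisymm (not_lt.1 hi) (hd_nonneg i)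
    have htx : t * x i = 0 := by nlinarith [mul_nonneg ht (hx i), mul_nonneg hs (hy i)]
    have hsy : s * y i = 0 := by linarith
    rw [mul_prod_rpow_eq_zero ha htx, mul_prod_rpow_eq_zero ha hsy, add_zero]
    exact prod_nonneg fun k _ => rpow_nonneg (hd_nonneg k) _

theorem exists_mem_segment_prod_rpow_eq_s3 [Nontrivial ι] (ha : ∀ i, 0 < a i) {x : ι → ℝ} {z : ℝ}
    (hx : ∀ i, 0 ≤ x i) (hz₀ : 0 ≤ z) (hz : z ≤ ∏ i, x i ^ a i) :
    ∃ p q : ι → ℝ, (∀ i, 0 ≤ p i) ∧ (∀ i, 0 ≤ q i) ∧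
      ∏ i, p i ^ a i = z ∧ ∏ i, q i ^ a i = z ∧ x ∈ segment ℝ p q := by
  classical
  obtain ⟨i, j, hij⟩ := exists_pair_ne ι
  set v : ι → ℝ := Pi.single i 1 - Pi.single j 1
  have hvi : ∀ d : ℝ, (x + d • v) i = x i + d := fun d => by simp [v, hij]
  have hvj : ∀ d : ℝ, (x + d • v) j = x j - d := fun d => by simp [v, hij.symm]; ring
  have hvk : ∀ (d : ℝ) k, k ≠ i → k ≠ j → (x + d • v) k = x k := fun d k hki hkj => by
    simp [v, hki, hkj]
  have hnonneg : ∀ d ∈ Icc (-x i) (x j), ∀ k, 0 ≤ (x + d • v) k := by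
    rintro d ⟨hd₁, hd₂⟩ k
    by_cases hki : k = i
    · rw [hki, hvi]; linarith
    by_cases hkj : k = j
    · rw [hkj, hvj]; linarith
    rw [hvk d k hki hkj]; exact hx k
  have hcont : Continuous fun d : ℝ => ∏ k, (x + d • v) k ^ a k :=
    continuous_finsetProd _ fun k _ =>
      (by fun_prop : Continuous fun d : ℝ => (x + d • v) k).rpow_const fun _ => .inr (ha k).le
  have hzero_i : ∏ k, (x + (-x i) • v) k ^ a k = 0 :=
    prod_rpow_eq_zero ha (i := i) (by rw [hvi]; ring)
  have hzero_j : ∏ k, (x + x j • v) k ^ a k = 0 :=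
    prod_rpow_eq_zero ha (i := j) (by rw [hvj]; ring)
  obtain ⟨s, hs, t, ht, hfs, hft, hseg⟩ :=
    exists_mem_segment_eq_of_le (fun y => ∏ k, y k ^ a k) (x := x) (v := v) (hx i) (hx j)
      hcont.continuousOn hz (hzero_i.le.trans hz₀) (hzero_j.le.trans hz₀)
  exact ⟨x + s • v, x + t • v, hnonneg s hs, hnonneg t ht, hfs, hft, hseg⟩

end

theorem convexHull_F_eq_of_beta_le_one_general (n : ℕ) (hn : 2 ≤ n) (a : Fin n → ℝ)
    (ha : ∀ i, 0 < a i) (ℓ u : ℝ) (hℓ : 0 < ℓ)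
    (β : ℝ) (hβ : β = ∑ i, a i) (hβ1 : β ≤ 1) :
    convexHull ℝ
      {xz : (Fin n → ℝ) × ℝ | (∀ k, 0 ≤ xz.1 k) ∧
        ℓ ≤ ∏ i, xz.1 i ^ a i ∧ (∏ i, xz.1 i ^ a i) ≤ u ∧
        xz.2 = ∏ i, xz.1 i ^ a i} =
    {xz : (Fin n → ℝ) × ℝ | (∀ k, 0 ≤ xz.1 k) ∧
        ℓ ≤ xz.2 ∧ xz.2 ≤ u ∧
        xz.2 ≤ ∏ i, xz.1 i ^ a i} := by
  subst hβ
  refine (convexHull_min ?_ ?_).antisymm ?_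
  · rintro ⟨x, z⟩ ⟨hx, hℓz, hzu, hz⟩
    exact ⟨hx, hz ▸ hℓz, hz ▸ hzu, hz.le⟩
  · intro p hp q hq s t hs ht hst
    obtain ⟨hnonneg, hle⟩ := (concaveOn_prod_rpow_s3 ha hβ1).convex_hypograph
      ⟨hp.1, hp.2.2.2⟩ ⟨hq.1, hq.2.2.2⟩ hs ht hst
    obtain ⟨hℓz, hzu⟩ := convex_Icc ℓ u ⟨hp.2.1, hp.2.2.1⟩ ⟨hq.2.1, hq.2.2.1⟩ hs ht hst
    exact ⟨hnonneg, hℓz, hzu, hle⟩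
  · rintro ⟨x, z⟩ ⟨hx, hℓz, hzu, hzf⟩
    have : Nontrivial (Fin n) := Fin.nontrivial_iff_two_le.2 hn
    obtain ⟨p, q, hp, hq, hfp, hfq, hxpq⟩ :=
      exists_mem_segment_prod_rpow_eq_s3 ha hx (hℓ.le.trans hℓz) hzf
    have hmem : ∀ y : Fin n → ℝ, (∀ k, 0 ≤ y k) → ∏ i, y i ^ a i = z →
        ((y, z) : (Fin n → ℝ) × ℝ) ∈ {xz : (Fin n → ℝ) × ℝ | (∀ k, 0 ≤ xz.1 k) ∧
          ℓ ≤ ∏ i, xz.1 i ^ a i ∧ (∏ i, xz.1 i ^ a i) ≤ u ∧ xz.2 = ∏ i, xz.1 i ^ a i} :=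
      fun y hy hfy => ⟨hy, hfy ▸ hℓz, hfy ▸ hzu, hfy.symm⟩
    refine segment_subset_convexHull (hmem p hp hfp) (hmem q hq hfq) ?_
    rw [← Prod.image_mk_segment_left]
    exact mem_image_of_mem _ hxpq

/-- If `β ≤ 1`, then `conv(F(ℝ₊ⁿ)) = F(ℝ₊ⁿ)^≤`. -/
theorem convexHull_F_eq_of_beta_le_one (n : ℕ) (hn : 2 ≤ n) (a : Fin n → ℝ)
    (ha : ∀ i, 0 < a i) (ℓ u : ℝ) (hℓ : 0 < ℓ) (hℓu : ℓ < u)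
    (β : ℝ) (hβ : β = ∑ i, a i) (hβ1 : β ≤ 1) :
    convexHull ℝ
      {xz : (Fin n → ℝ) × ℝ | (∀ k, 0 ≤ xz.1 k) ∧
        ℓ ≤ ∏ i, xz.1 i ^ a i ∧ (∏ i, xz.1 i ^ a i) ≤ u ∧
        xz.2 = ∏ i, xz.1 i ^ a i} =
    {xz : (Fin n → ℝ) × ℝ | (∀ k, 0 ≤ xz.1 k) ∧
        ℓ ≤ xz.2 ∧ xz.2 ≤ u ∧
        xz.2 ≤ ∏ i, xz.1 i ^ a i} :=
  convexHull_F_eq_of_beta_le_one_general n hn a ha ℓ u hℓ β hβ hβ1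
end

section
/- For n > 2, any indices i ≠ j, and any reals 0 < p < q, the set X ∩ W_{ij} is unbounded: for every M > 0 there exists x ∈ X ∩ W_{ij} with ‖x‖ > M. -/
open Real Finset

/-
Fix a third index `k ∉ {i, j}` (this is where `n > 2` enters). Put `x i = t`, `x j = p t` for
a large `t`, and solve `f x = ℓ` for the remaining free coordinate `x k`, which is possible
because `a k ≠ 0`. The resulting point lies in `X ∩ W_{ij}` and has norm at least `t`.
-/

theorem Fintype.exists_ne_and_ne_of_two_lt_card {α : Type*} [Fintype α]
    (h : 2 < Fintype.card α) (i j : α) : ∃ k, k ≠ i ∧ k ≠ j := by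
  classical
  by_contra! hk
  have huniv : (univ : Finset α) ⊆ {i, j} := fun k _ => by
    rw [mem_insert, mem_singleton]
    exact or_iff_not_imp_left.2 (hk k)
  have := (card_le_card huniv).trans card_le_two
  rw [card_univ] at this
  omega

section UpdateCoordinate

variable {ι : Type*} [Fintype ι] [DecidableEq ι]

theorem prod_update_rpow (y a : ι → ℝ) (k : ι) (s : ℝ) :
    ∏ m, Function.update y k s m ^ a m = s ^ a k * ∏ m ∈ univ.erase k, y m ^ a m := by
  rw [← mul_prod_erase univ _ (mem_univ k), Function.update_self]
  congr 1
  refine prod_congr rfl fun m hm => ?_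
  rw [Function.update_of_ne (ne_of_mem_erase hm)]

theorem exists_pos_prod_update_rpow_eq (y a : ι → ℝ) {k : ι} (hak : a k ≠ 0)
    (hy : ∀ m ≠ k, 0 < y m) {c : ℝ} (hc : 0 < c) :
    ∃ s > 0, ∏ m, Function.update y k s m ^ a m = c := by
  set P := ∏ m ∈ univ.erase k, y m ^ a m
  have hP : 0 < P := prod_pos fun m hm => rpow_pos_of_pos (hy m (ne_of_mem_erase hm)) _
  refine ⟨(c / P) ^ (a k)⁻¹, by positivity, ?_⟩
  rw [prod_update_rpow, ← rpow_mul (by positivity), inv_mul_cancel₀ hak, rpow_one,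
    div_mul_cancel₀ c hP.ne']

end UpdateCoordinate

/-- For `n > 2`, the set `X ∩ W_{ij}` is unbounded. -/
theorem X_inter_W_unbounded (n : ℕ) (hn : 2 < n) (a : Fin n → ℝ) (ha : ∀ k, 0 < a k)
    (ℓ u : ℝ) (hℓ : 0 < ℓ) (hℓu : ℓ < u)
    (i j : Fin n) (hij : i ≠ j) (p q : ℝ) (hp : 0 < p) (hpq : p < q) :
    ∀ M : ℝ, 0 < M →
      ∃ x : Fin n → ℝ, ((∀ k, 0 ≤ x k) ∧
        ℓ ≤ ∏ k, x k ^ a k ∧ (∏ k, x k ^ a k) ≤ u ∧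
        p * x i ≤ x j ∧ x j ≤ q * x i) ∧ M < ‖x‖ := by
  intro M hM
  obtain ⟨k, hki, hkj⟩ :=
    Fintype.exists_ne_and_ne_of_two_lt_card (by rwa [Fintype.card_fin]) i j
  set t := M + 1
  have ht : 0 < t := by positivity
  set y : Fin n → ℝ := fun m => if m = j then p * t else t
  have hy : ∀ m, 0 < y m := fun m => by dsimp only [y]; split_ifs <;> positivity
  obtain ⟨s, hs, hprod⟩ :=
    exists_pos_prod_update_rpow_eq y a (ha k).ne' (fun m _ => hy m) hℓ
  set x := Function.update y k s
  have hxi : x i = t := by simp [x, y, Function.update_of_ne hki.symm, hij]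
  have hxj : x j = p * t := by simp [x, y, Function.update_of_ne hkj.symm]
  have hx : ∀ m, 0 ≤ x m := fun m => by
    by_cases hm : m = k
    · simp [x, hm, hs.le]
    · simp only [x, Function.update_of_ne hm]; exact (hy m).le
  refine ⟨x, ⟨hx, hprod.ge, hprod.le.trans hℓu.le, by rw [hxi, hxj], ?_⟩, ?_⟩
  · rw [hxi, hxj]; exact mul_le_mul_of_nonneg_right hpq.le ht.le
  · calc M < t := lt_add_one M
      _ = ‖x i‖ := by rw [hxi, norm_of_nonneg ht.le]
      _ ≤ ‖x‖ := norm_le_pi_norm x i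
end

section
/- Let n ≥ 2, a ∈ ℝⁿ with all aᵢ > 0, indices i ≠ j, reals 0 < p < q, and ξ > 0. Define dᵢ = q^{−a_j/(aᵢ+a_j)} − p^{−a_j/(aᵢ+a_j)} and d_j = q^{aᵢ/(aᵢ+a_j)} − p^{aᵢ/(aᵢ+a_j)}; then dᵢ < 0 < d_j, and for every x̌ ∈ ℝ₊ⁿ satisfying x̌_j = p x̌ᵢ and ∏_{k=1}^n x̌_k^{a_k} = ξ, there exists a unique pair (s̄, x̄) ∈ ℝ₊ × ℝ₊ⁿ such that: x̄_j = q x̄ᵢ; x̄ᵢ = x̌ᵢ + s̄ dᵢ and x̄_j = x̌_j + s̄ d_j; x̄_k = x̌_k for all k ∉ {i,j}; and ∏_{k=1}^n x̄_k^{a_k} = ξ. -/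
open Real Finset

/-- `dᵢ < 0 < d_j`, and for every `x̌ ∈ ℝ₊ⁿ` with `x̌_j = p x̌ᵢ` and
`∏ x̌_k^{a_k} = ξ` there is a unique `(s̄, x̄) ∈ ℝ₊ × ℝ₊ⁿ` solving the system. -/
theorem parallel_translation_unique (n : ℕ) (hn : 2 ≤ n) (a : Fin n → ℝ)
    (ha : ∀ k, 0 < a k) (i j : Fin n) (hij : i ≠ j)
    (p q ξ : ℝ) (hp : 0 < p) (hpq : p < q) (hξ : 0 < ξ)
    (di dj : ℝ)
    (hdi : di = q ^ (-(a j / (a i + a j))) - p ^ (-(a j / (a i + a j))))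
    (hdj : dj = q ^ (a i / (a i + a j)) - p ^ (a i / (a i + a j))) :
    di < 0 ∧ 0 < dj ∧
    ∀ x : Fin n → ℝ, (∀ k, 0 ≤ x k) → x j = p * x i → (∏ k, x k ^ a k) = ξ →
      ∃! sx : ℝ × (Fin n → ℝ),
        0 ≤ sx.1 ∧ (∀ k, 0 ≤ sx.2 k) ∧
        sx.2 j = q * sx.2 i ∧
        sx.2 i = x i + sx.1 * di ∧
        sx.2 j = x j + sx.1 * dj ∧
        (∀ k, k ≠ i → k ≠ j → sx.2 k = x k) ∧
        (∏ k, sx.2 k ^ a k) = ξ := by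
  have hq : 0 < q := hp.trans hpq
  have hS : 0 < a i + a j := add_pos (ha i) (ha j)
  set α := a i / (a i + a j) with hαdef
  set β := a j / (a i + a j) with hβdef
  have hsum : α + β = 1 := by rw [hαdef, hβdef]; field_simp
  have hβpos : 0 < β := div_pos (ha j) hS
  have hαpos : 0 < α := div_pos (ha i) hS
  have hdi0 : di < 0 := by
    rw [hdi, sub_neg]
    exact Real.rpow_lt_rpow_of_neg hp hpq (neg_lt_zero.2 hβpos)
  have hdj0 : 0 < dj := by
    rw [hdj, sub_pos]
    exact Real.rpow_lt_rpow hp.le hpq hαpos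
  have hq1 : q * q ^ (-β) = q ^ α := by
    rw [show α = 1 + -β by linarith, Real.rpow_add hq, Real.rpow_one]
  have hp1 : p * p ^ (-β) = p ^ α := by
    rw [show α = 1 + -β by linarith, Real.rpow_add hp, Real.rpow_one]
  have hpp : p ^ β * p ^ (-β) = 1 := by
    rw [← Real.rpow_add hp]; simp
  have hpa : p ^ β * p ^ α = p := by
    rw [← Real.rpow_add hp, show β + α = 1 by linarith, Real.rpow_one]
  have hkey : dj - q * di = p ^ (-β) * (q - p) := by
    rw [hdi, hdj]; linear_combination hp1 - hq1
  have hkeypos : 0 < dj - q * di := by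
    rw [hkey]
    exact mul_pos (Real.rpow_pos_of_pos hp _) (sub_pos.2 hpq)
  refine ⟨hdi0, hdj0, ?_⟩
  intro x hx0 hxj hxprod
  have hxpos : ∀ k, 0 < x k := by
    intro k
    rcases (hx0 k).eq_or_lt with h | h
    · have h0 : (∏ k, x k ^ a k) = 0 :=
        Finset.prod_eq_zero (Finset.mem_univ k)
          (by rw [← h, Real.zero_rpow (ha k).ne'])
      rw [hxprod] at h0; exact absurd h0 hξ.ne'
    · exact h
  have hxi := hxpos i
  set s₀ := x i * p ^ β with hs₀
  set c := x i * (p ^ β * q ^ (-β)) with hc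
  have hcpos : 0 < c := by
    have := Real.rpow_pos_of_pos hp β
    have := Real.rpow_pos_of_pos hq (-β)
    positivity
  have hyi : c = x i + s₀ * di := by
    rw [hc, hs₀, hdi]; linear_combination (x i) * hpp
  have hyj : q * c = x j + s₀ * dj := by
    rw [hc, hs₀, hdj, hxj]
    linear_combination (x i * p ^ β) * hq1 + x i * hpa
  set y : Fin n → ℝ := fun k => if k = i then c else if k = j then q * c else x k with hy
  have hyi' : y i = c := by simp [hy]
  have hyj' : y j = q * c := by simp [hy, hij.symm]
  have hyk : ∀ k, k ≠ i → k ≠ j → y k = x k := by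
    intro k h1 h2; simp [hy, h1, h2]
  have hprodsplit : ∀ z : Fin n → ℝ,
      (∏ k, z k ^ a k)
        = z i ^ a i * z j ^ a j * ∏ k ∈ ({i, j} : Finset (Fin n))ᶜ, z k ^ a k := by
    intro z
    rw [← Finset.prod_mul_prod_compl ({i, j} : Finset (Fin n)) (fun k => z k ^ a k),
      Finset.prod_pair hij]
  have hcompl :
      (∏ k ∈ ({i, j} : Finset (Fin n))ᶜ, y k ^ a k)
        = ∏ k ∈ ({i, j} : Finset (Fin n))ᶜ, x k ^ a k := by
    refine Finset.prod_congr rfl ?_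
    intro k hk
    simp only [Finset.mem_compl, Finset.mem_insert, Finset.mem_singleton, not_or] at hk
    rw [hyk k hk.1 hk.2]
  have hβS : β * (a i + a j) = a j := by
    rw [hβdef]; field_simp
  have e1 : c ^ (a i + a j) = x i ^ (a i + a j) * (p ^ a j * q ^ (-a j)) := by
    have h1 : (0:ℝ) ≤ p ^ β := (Real.rpow_pos_of_pos hp β).le
    have h2 : (0:ℝ) ≤ q ^ (-β) := (Real.rpow_pos_of_pos hq (-β)).le
    rw [hc, Real.mul_rpow hxi.le (by positivity), Real.mul_rpow h1 h2,
      ← Real.rpow_mul hp.le, ← Real.rpow_mul hq.le, hβS, neg_mul, hβS]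
  have key2 : c ^ a i * (q * c) ^ a j = x i ^ a i * x j ^ a j := by
    calc c ^ a i * (q * c) ^ a j = (c ^ a i * c ^ a j) * q ^ a j := by
          rw [Real.mul_rpow hq.le hcpos.le]; ring
      _ = c ^ (a i + a j) * q ^ a j := by rw [← Real.rpow_add hcpos]
      _ = x i ^ (a i + a j) * (p ^ a j * (q ^ (-a j) * q ^ a j)) := by rw [e1]; ring
      _ = x i ^ (a i + a j) * p ^ a j := by rw [← Real.rpow_add hq]; simp
      _ = (x i ^ a i * x i ^ a j) * p ^ a j := by rw [← Real.rpow_add hxi]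
      _ = x i ^ a i * x j ^ a j := by
          rw [hxj, Real.mul_rpow hp.le hxi.le]; ring
  have hyprod : (∏ k, y k ^ a k) = ξ := by
    rw [hprodsplit y, hyi', hyj', key2, hcompl, ← hprodsplit x, hxprod]
  have hs₀eq : s₀ * (dj - q * di) = (q - p) * x i := by
    linear_combination q * hyi - hyj - hxj
  refine ⟨(s₀, y), ⟨?_, ?_, ?_, ?_, ?_, hyk, hyprod⟩, ?_⟩
  · exact mul_nonneg hxi.le (Real.rpow_pos_of_pos hp β).le
  · intro k
    show 0 ≤ y k
    by_cases h1 : k = i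
    · subst h1; rw [hyi']; exact hcpos.le
    by_cases h2 : k = j
    · subst h2; rw [hyj']; exact (mul_pos hq hcpos).le
    · rw [hyk k h1 h2]; exact (hxpos k).le
  · show y j = q * y i
    rw [hyi', hyj']
  · show y i = x i + s₀ * di
    rw [hyi']; exact hyi
  · show y j = x j + s₀ * dj
    rw [hyj']; exact hyj
  · rintro ⟨s, z⟩ ⟨hs0, hz0, hzj, hzi, hzj', hzk, hzprod⟩
    dsimp only at hs0 hz0 hzj hzi hzj' hzk hzprod
    have heq : x j + s * dj = q * (x i + s * di) := by
      rw [← hzj', hzj, hzi]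
    have hseq : s * (dj - q * di) = (q - p) * x i := by
      linear_combination heq - hxj
    have hss : s = s₀ := by
      have h2 : (s - s₀) * (dj - q * di) = 0 := by
        linear_combination hseq - hs₀eq
      rcases mul_eq_zero.1 h2 with h | h
      · linarith [sub_eq_zero.1 h]
      · exact absurd h hkeypos.ne'
    have hzy : z = y := by
      funext k
      by_cases h1 : k = i
      · subst h1; rw [hzi, hss, hyi', hyi]
      by_cases h2 : k = j
      · subst h2; rw [hzj', hss, hyj', hyj]
      · rw [hzk k h1 h2, hyk k h1 h2]
    simp only [Prod.mk.injEq]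
    exact ⟨hss, hzy⟩
end

section
/- Let λ = p^{a_j}/(d_j − dᵢ p)^{aᵢ+a_j}. Then for every x ∈ ℝ₊ⁿ with x_j = p xᵢ or x_j = q xᵢ, one has λ (d_j xᵢ − dᵢ x_j)^{aᵢ+a_j} ∏_{k ∉ {i,j}} x_k^{a_k} = ∏_{k=1}^n x_k^{a_k}. -/
open Real Finset

/-!
With `s = aᵢ + a_j` and `u = -a_j / s`, one has `aᵢ / s = 1 + u`, so the linear form
`d_j xᵢ - dᵢ x_j` restricted to the ray `x_j = c xᵢ` equals `(d_j - dᵢ c) xᵢ`, where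
`d_j - dᵢ p = q^u (q - p)` and `d_j - dᵢ q = p^u (q - p)`. Consequently
`λ (d_j - dᵢ c)^s = c^{a_j}` for `c ∈ {p, q}`, and on the ray
`λ (d_j - dᵢ c)^s xᵢ^s = xᵢ^{aᵢ} (c xᵢ)^{a_j} = xᵢ^{aᵢ} x_j^{a_j}`.
-/

theorem Finset.prod_univ_eq_mul_mul_prod_compl_pair {ι M : Type*} [Fintype ι] [DecidableEq ι]
    [CommMonoid M] (f : ι → M) {i j : ι} (hij : i ≠ j) :
    ∏ k, f k = f i * f j * ∏ k ∈ ({i, j} : Finset ι)ᶜ, f k := by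
  rw [← prod_mul_prod_compl {i, j} f, prod_pair hij]

theorem Real.rpow_one_add_sub_sub_mul {x y : ℝ} (hx : 0 < x) (hy : 0 < y) (u c : ℝ) :
    (y ^ (1 + u) - x ^ (1 + u)) - (y ^ u - x ^ u) * c = y ^ u * (y - c) - x ^ u * (x - c) := by
  rw [rpow_add hx, rpow_add hy, rpow_one, rpow_one]
  ring

theorem Real.rpow_neg_div_mul_rpow {c r s : ℝ} (hc : 0 < c) (hr : 0 ≤ r) (hs : s ≠ 0) (b : ℝ) :
    (c ^ (-(b / s)) * r) ^ s = c ^ (-b) * r ^ s := by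
  rw [mul_rpow (rpow_nonneg hc.le _) hr, ← rpow_mul hc.le]
  congr 2
  field_simp

theorem Real.div_rpow_neg_div_mul_rpow_neg_div {p q r s : ℝ} (hp : 0 < p) (hq : 0 < q)
    (hr : 0 < r) (hs : s ≠ 0) (b : ℝ) :
    p ^ b / (q ^ (-(b / s)) * r) ^ s * (p ^ (-(b / s)) * r) ^ s = q ^ b := by
  rw [rpow_neg_div_mul_rpow hq hr.le hs, rpow_neg_div_mul_rpow hp hr.le hs,
    rpow_neg hp.le, rpow_neg hq.le]
  have := (rpow_pos_of_pos hp b).ne'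
  have := (rpow_pos_of_pos hr s).ne'
  field_simp

theorem Real.mul_mul_rpow_eq_rpow_mul_mul_rpow {α β c d lam t : ℝ} (ht : 0 ≤ t) (hc : 0 ≤ c)
    (hd : 0 ≤ d) (hαβ : α + β ≠ 0) (hlam : lam * d ^ (α + β) = c ^ β) :
    lam * (d * t) ^ (α + β) = t ^ α * (c * t) ^ β := by
  rw [mul_rpow hd ht, mul_rpow hc ht, rpow_add' ht hαβ, ← mul_assoc, hlam]
  ring

theorem Real.mul_rpow_linear_mul_prod_compl_pair_eq_prod_of_ray {ι : Type*} [Fintype ι]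
    [DecidableEq ι] (a x : ι → ℝ) (hx : ∀ k, 0 ≤ x k) {i j : ι} (hij : i ≠ j)
    (hs : a i + a j ≠ 0) {c di dj lam : ℝ} (hc : 0 ≤ c) (hd : 0 ≤ dj - di * c)
    (hlam : lam * (dj - di * c) ^ (a i + a j) = c ^ a j) (hray : x j = c * x i) :
    lam * (dj * x i - di * x j) ^ (a i + a j) * ∏ k ∈ ({i, j} : Finset ι)ᶜ, x k ^ a k =
      ∏ k, x k ^ a k := by
  have hform : dj * x i - di * x j = (dj - di * c) * x i := by rw [hray]; ring
  rw [hform, mul_mul_rpow_eq_rpow_mul_mul_rpow (hx i) hc hd hs hlam, ← hray,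
    prod_univ_eq_mul_mul_prod_compl_pair _ hij]

theorem lower_minorant_matches_on_rays_general (n : ℕ) (a : Fin n → ℝ)
    (ha : ∀ k, 0 < a k) (i j : Fin n) (hij : i ≠ j)
    (p q : ℝ) (hp : 0 < p) (hpq : p < q)
    (di dj lam : ℝ)
    (hdi : di = q ^ (-(a j / (a i + a j))) - p ^ (-(a j / (a i + a j))))
    (hdj : dj = q ^ (a i / (a i + a j)) - p ^ (a i / (a i + a j)))
    (hlam : lam = p ^ a j / (dj - di * p) ^ (a i + a j)) :
    ∀ x : Fin n → ℝ, (∀ k, 0 ≤ x k) → (x j = p * x i ∨ x j = q * x i) →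
      lam * (dj * x i - di * x j) ^ (a i + a j) *
          ∏ k ∈ ({i, j} : Finset (Fin n))ᶜ, x k ^ a k =
        ∏ k, x k ^ a k := by
  intro x hx hray
  have hq : 0 < q := hp.trans hpq
  have hqp : 0 < q - p := sub_pos.2 hpq
  have hs : a i + a j ≠ 0 := (add_pos (ha i) (ha j)).ne'
  have hexp : a i / (a i + a j) = 1 + -(a j / (a i + a j)) := by field_simp; ring
  have hdp : dj - di * p = q ^ (-(a j / (a i + a j))) * (q - p) := by
    rw [hdi, hdj, hexp, rpow_one_add_sub_sub_mul hp hq]; ring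
  have hdq : dj - di * q = p ^ (-(a j / (a i + a j))) * (q - p) := by
    rw [hdi, hdj, hexp, rpow_one_add_sub_sub_mul hp hq]; ring
  rcases hray with hray | hray
  · refine mul_rpow_linear_mul_prod_compl_pair_eq_prod_of_ray a x hx hij hs hp.le
      (by rw [hdp]; positivity) ?_ hray
    rw [hlam, div_mul_cancel₀ _ (by rw [hdp]; positivity)]
  · refine mul_rpow_linear_mul_prod_compl_pair_eq_prod_of_ray a x hx hij hs hq.le
      (by rw [hdq]; positivity) ?_ hray
    rw [hlam, hdp, hdq, div_rpow_neg_div_mul_rpow_neg_div hp hq hqp hs]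

/-- `f′_ℓ` matches `f` on the rays `x_j = p xᵢ` and `x_j = q xᵢ`. -/
theorem lower_minorant_matches_on_rays (n : ℕ) (hn : 2 ≤ n) (a : Fin n → ℝ)
    (ha : ∀ k, 0 < a k) (i j : Fin n) (hij : i ≠ j)
    (p q : ℝ) (hp : 0 < p) (hpq : p < q)
    (di dj lam : ℝ)
    (hdi : di = q ^ (-(a j / (a i + a j))) - p ^ (-(a j / (a i + a j))))
    (hdj : dj = q ^ (a i / (a i + a j)) - p ^ (a i / (a i + a j)))
    (hlam : lam = p ^ a j / (dj - di * p) ^ (a i + a j)) :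
    ∀ x : Fin n → ℝ, (∀ k, 0 ≤ x k) → (x j = p * x i ∨ x j = q * x i) →
      lam * (dj * x i - di * x j) ^ (a i + a j) *
          ∏ k ∈ ({i, j} : Finset (Fin n))ᶜ, x k ^ a k =
        ∏ k, x k ^ a k :=
  lower_minorant_matches_on_rays_general n a ha i j hij p q hp hpq di dj lam hdi hdj hlam
end

section
/- Let λ = p^{a_j}/(d_j − dᵢ p)^{aᵢ+a_j} and define f′_ℓ(x) = λ (d_j xᵢ − dᵢ x_j)^{aᵢ+a_j} ∏_{k ∉ {i,j}} x_k^{a_k}. Then f′_ℓ(x) ≤ ∏_{k=1}^n x_k^{a_k} for every x ∈ W_{ij}. -/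
open Real Finset

/-!
Put `α = a_j / (a_i + a_j)` and `s = a_i + a_j`. Multiplying out the definitions of `d_i, d_j`
shows that `λ^(1/s) (d_j u - d_i v) = u · L(v/u)`, where `L` is the secant of the concave map
`r ↦ r^α` through `p` and `q`. On the wedge `v/u ∈ [p, q]`, so `L(v/u) ≤ (v/u)^α`; raising to
the power `s` gives `u^{a_i} v^{a_j}`, and the remaining coordinates factor out of both sides.
-/

theorem ConcaveOn.sub_mul_add_sub_mul_le {s : Set ℝ} {f : ℝ → ℝ} (hf : ConcaveOn ℝ s f)
    {x y z : ℝ} (hx : x ∈ s) (hz : z ∈ s) (hxy : x ≤ y) (hyz : y ≤ z) :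
    (z - y) * f x + (y - x) * f z ≤ (z - x) * f y := by
  rcases hxy.eq_or_lt with rfl | hxy
  · simp
  rcases hyz.eq_or_lt with rfl | hyz
  · simp
  have := hf.neg.secant_mono_aux1 hx hz hxy hyz
  simp only [Pi.neg_apply] at this
  linarith

theorem rpow_secant_le_of_mem_wedge {α p q u v : ℝ} (hα0 : 0 < α) (hα1 : α < 1) (hp : 0 < p)
    (hu : 0 ≤ u) (hpv : p * u ≤ v) (hvq : v ≤ q * u) :
    p ^ α * (q * u - v) + q ^ α * (v - p * u) ≤ (q - p) * (u ^ (1 - α) * v ^ α) := by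
  rcases hu.eq_or_lt with rfl | hu
  · have hv : v = 0 := by linarith
    simp [hv, zero_rpow hα0.ne']
  have hpr : p ≤ v / u := (le_div_iff₀ hu).mpr hpv
  have hrq : v / u ≤ q := (div_le_iff₀ hu).mpr hvq
  have chord := (strictConcaveOn_rpow hα0 hα1).concaveOn.sub_mul_add_sub_mul_le
    (Set.mem_Ici.mpr hp.le) (Set.mem_Ici.mpr (hp.le.trans (hpr.trans hrq))) hpr hrq
  have hscale : u ^ (1 - α) * v ^ α = (v / u) ^ α * u := by
    rw [div_rpow ((mul_nonneg hp.le hu.le).trans hpv) hu.le, rpow_sub hu, rpow_one]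
    field_simp
  rw [hscale]
  calc p ^ α * (q * u - v) + q ^ α * (v - p * u)
      = ((q - v / u) * p ^ α + (v / u - p) * q ^ α) * u := by field_simp
    _ ≤ (q - p) * (v / u) ^ α * u := by gcongr
    _ = (q - p) * ((v / u) ^ α * u) := by ring

theorem rpow_mul_rpow_mul_wedge_coeff_eq {α p q : ℝ} (hp : 0 < p) (hq : 0 < q) (u v : ℝ) :
    p ^ α * q ^ α * ((q ^ (1 - α) - p ^ (1 - α)) * u - (q ^ (-α) - p ^ (-α)) * v) =
      p ^ α * (q * u - v) + q ^ α * (v - p * u) := by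
  have hone {r : ℝ} (hr : 0 < r) : r ^ α * r ^ (1 - α) = r := by
    rw [← rpow_add hr, add_sub_cancel, rpow_one]
  have hzero {r : ℝ} (hr : 0 < r) : r ^ α * r ^ (-α) = 1 := by
    rw [← rpow_add hr, add_neg_cancel, rpow_zero]
  linear_combination p ^ α * u * hone hq - q ^ α * u * hone hp - p ^ α * v * hzero hq
    + q ^ α * v * hzero hp

theorem wedge_minorant_two_var {A B p q u v di dj : ℝ} (hA : 0 < A) (hB : 0 < B)
    (hp : 0 < p) (hpq : p < q)
    (hdi : di = q ^ (-(B / (A + B))) - p ^ (-(B / (A + B))))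
    (hdj : dj = q ^ (A / (A + B)) - p ^ (A / (A + B)))
    (hu : 0 ≤ u) (hpv : p * u ≤ v) (hvq : v ≤ q * u) :
    p ^ B / (dj - di * p) ^ (A + B) * (dj * u - di * v) ^ (A + B) ≤ u ^ A * v ^ B := by
  have hAB : 0 < A + B := add_pos hA hB
  set α := B / (A + B)
  have hα0 : 0 < α := div_pos hB hAB
  have hα1 : α < 1 := (div_lt_one hAB).mpr (by linarith)
  have hαs : α * (A + B) = B := div_mul_cancel₀ B hAB.ne'
  have hβs : (1 - α) * (A + B) = A := by rw [sub_mul, hαs, one_mul, add_sub_cancel_right]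
  rw [show A / (A + B) = 1 - α by rw [eq_sub_iff_add_eq, ← add_div, div_self hAB.ne']] at hdj
  have hq : 0 < q := hp.trans hpq
  have hK : 0 < p ^ α * q ^ α := by positivity
  have hcoeff (x y : ℝ) : dj * x - di * y =
      (p ^ α * (q * x - y) + q ^ α * (y - p * x)) / (p ^ α * q ^ α) := by
    rw [eq_div_iff hK.ne', mul_comm, hdi, hdj, rpow_mul_rpow_mul_wedge_coeff_eq hp hq]
  have hbase : dj - di * p = p ^ α * (q - p) / (p ^ α * q ^ α) := by
    simpa using hcoeff 1 p
  have hv : 0 ≤ v := (mul_nonneg hp.le hu).trans hpv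
  have hN : 0 ≤ p ^ α * (q * u - v) + q ^ α * (v - p * u) := by
    have hvq' : 0 ≤ q * u - v := by linarith
    have hpv' : 0 ≤ v - p * u := by linarith
    positivity
  have hqp : 0 < q - p := sub_pos.mpr hpq
  have hsecant : p ^ α / (dj - di * p) * (dj * u - di * v) =
      (p ^ α * (q * u - v) + q ^ α * (v - p * u)) / (q - p) := by
    rw [hbase, hcoeff]
    field_simp
  have hpB : p ^ B = (p ^ α) ^ (A + B) := by rw [← rpow_mul hp.le, hαs]
  rw [hpB, ← div_rpow (by positivity) (by rw [hbase]; positivity),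
    ← mul_rpow (by rw [hbase]; positivity) (by rw [hcoeff u v]; positivity), hsecant]
  calc ((p ^ α * (q * u - v) + q ^ α * (v - p * u)) / (q - p)) ^ (A + B)
      ≤ (u ^ (1 - α) * v ^ α) ^ (A + B) := by
        gcongr
        exact (div_le_iff₀' hqp).mpr (rpow_secant_le_of_mem_wedge hα0 hα1 hp hu hpv hvq)
    _ = u ^ A * v ^ B := by
        rw [mul_rpow (by positivity) (by positivity), ← rpow_mul hu, ← rpow_mul hv, hβs, hαs]

theorem lower_minorant_on_wedge_general (n : ℕ) (a : Fin n → ℝ)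
    (ha : ∀ k, 0 < a k) (i j : Fin n) (hij : i ≠ j)
    (p q : ℝ) (hp : 0 < p) (hpq : p < q)
    (di dj lam : ℝ)
    (hdi : di = q ^ (-(a j / (a i + a j))) - p ^ (-(a j / (a i + a j))))
    (hdj : dj = q ^ (a i / (a i + a j)) - p ^ (a i / (a i + a j)))
    (hlam : lam = p ^ a j / (dj - di * p) ^ (a i + a j)) :
    ∀ x : Fin n → ℝ, (∀ k, 0 ≤ x k) → p * x i ≤ x j → x j ≤ q * x i →
      lam * (dj * x i - di * x j) ^ (a i + a j) *
          ∏ k ∈ ({i, j} : Finset (Fin n))ᶜ, x k ^ a k ≤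
        ∏ k, x k ^ a k := by
  intro x hx hpx hxq
  rw [← prod_mul_prod_compl {i, j}, prod_pair hij, hlam]
  exact mul_le_mul_of_nonneg_right
    (wedge_minorant_two_var (ha i) (ha j) hp hpq hdi hdj (hx i) hpx hxq)
    (prod_nonneg fun k _ => rpow_nonneg (hx k) _)

/-- `f′_ℓ` is a minorant of `f` on `W_{ij}`. -/
theorem lower_minorant_on_wedge (n : ℕ) (hn : 2 ≤ n) (a : Fin n → ℝ)
    (ha : ∀ k, 0 < a k) (i j : Fin n) (hij : i ≠ j)
    (p q : ℝ) (hp : 0 < p) (hpq : p < q)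
    (di dj lam : ℝ)
    (hdi : di = q ^ (-(a j / (a i + a j))) - p ^ (-(a j / (a i + a j))))
    (hdj : dj = q ^ (a i / (a i + a j)) - p ^ (a i / (a i + a j)))
    (hlam : lam = p ^ a j / (dj - di * p) ^ (a i + a j)) :
    ∀ x : Fin n → ℝ, (∀ k, 0 ≤ x k) → p * x i ≤ x j → x j ≤ q * x i →
      lam * (dj * x i - di * x j) ^ (a i + a j) *
          ∏ k ∈ ({i, j} : Finset (Fin n))ᶜ, x k ^ a k ≤
        ∏ k, x k ^ a k :=
  lower_minorant_on_wedge_general n a ha i j hij p q hp hpq di dj lam hdi hdj hlam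
end

section
/- Let n = 2 and β = a₁ + a₂ ≥ 1, and let f′_ℓ(x) = λ (d₂ x₁ − d₁ x₂)^β. Then every function g : ℝ₊² → ℝ that is convex on W₁₂ and satisfies g(x) ≤ x₁^{a₁} x₂^{a₂} for all x ∈ W₁₂ also satisfies g(x) ≤ f′_ℓ(x) for all x ∈ W₁₂; together with the facts that f′_ℓ is convex on W₁₂, is a minorant of f on W₁₂, and agrees with f on the rays x₂ = p x₁ and x₂ = q x₁, this says f′_ℓ is the lower envelope of f over W₁₂. -/
/-!
Put `γ = a₂ / β`. On the wedge `f = h ^ β` with `h x = x₁ ^ (1 - γ) * x₂ ^ γ`, and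
`f′_ℓ = L ^ β`, where `L` is the linear function agreeing with `h` on the two edge rays:
`L` is a positive multiple `c` of `d₂ x₁ - d₁ x₂`, and `λ = c ^ β`.
On each vertical segment of the wedge, `L` is the secant of the concave function
`h (1, t) = t ^ γ`, so `L ≤ h`, i.e. `f′_ℓ ≤ f`; convexity of `f′_ℓ` is that of `s ↦ s ^ β`
for `β ≥ 1`. Conversely, every point `x` of the wedge lies on a segment, along the level line
of `L` through `x`, whose endpoints lie on the two edges. A convex minorant `g` of `f` is
bounded at `x` by its values at the endpoints, where `g ≤ f = L ^ β = f′_ℓ x`.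
-/

open Real

section Segment

variable {𝕜 E : Type*} [Field 𝕜] [LinearOrder 𝕜] [IsStrictOrderedRing 𝕜]
  [AddCommGroup E] [Module 𝕜 E]

theorem smul_add_smul_mem_segment_div_smul (ℓ : E →ₗ[𝕜] 𝕜) {v w : E} (hv : 0 < ℓ v) (hw : 0 < ℓ w)
    {a b : 𝕜} (ha : 0 ≤ a) (hb : 0 ≤ b) :
    a • v + b • w ∈
      segment 𝕜 ((ℓ (a • v + b • w) / ℓ v) • v) ((ℓ (a • v + b • w) / ℓ w) • w) := by
  set t := ℓ (a • v + b • w)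
  have hℓ : t = a * ℓ v + b * ℓ w := by simp [t]
  have hav : 0 ≤ a * ℓ v := mul_nonneg ha hv.le
  have hbw : 0 ≤ b * ℓ w := mul_nonneg hb hw.le
  rcases (hℓ ▸ add_nonneg hav hbw : 0 ≤ t).eq_or_lt with ht0 | ht0
  · obtain rfl : a = 0 := by simpa [hv.ne'] using (show a * ℓ v = 0 by linarith)
    obtain rfl : b = 0 := by simpa [hw.ne'] using (show b * ℓ w = 0 by linarith)
    simp [← ht0]
  · refine ⟨a * ℓ v / t, b * ℓ w / t, by positivity, by positivity, by
      rw [← add_div, ← hℓ, div_self ht0.ne'], ?_⟩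
    simp only [smul_smul]
    congr 2 <;> field_simp

theorem ConvexOn.le_comp_of_le_on_edges {β : Type*} [AddCommMonoid β] [LinearOrder β]
    [IsOrderedAddMonoid β] [Module 𝕜 β] [PosSMulStrictMono 𝕜 β] {s : Set E} {g : E → β}
    (hg : ConvexOn 𝕜 s g) (ℓ : E →ₗ[𝕜] 𝕜) (φ : 𝕜 → β) {v w : E} (hv : 0 < ℓ v) (hw : 0 < ℓ w)
    (hvs : ∀ c : 𝕜, 0 ≤ c → c • v ∈ s) (hws : ∀ c : 𝕜, 0 ≤ c → c • w ∈ s)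
    (hgv : ∀ c : 𝕜, 0 ≤ c → g (c • v) ≤ φ (ℓ (c • v)))
    (hgw : ∀ c : 𝕜, 0 ≤ c → g (c • w) ≤ φ (ℓ (c • w))) {a b : 𝕜} (ha : 0 ≤ a) (hb : 0 ≤ b) :
    g (a • v + b • w) ≤ φ (ℓ (a • v + b • w)) := by
  set t := ℓ (a • v + b • w)
  have ht : 0 ≤ t := by simp only [t, map_add, map_smul, smul_eq_mul]; positivity
  have hcv : 0 ≤ t / ℓ v := div_nonneg ht hv.le
  have hcw : 0 ≤ t / ℓ w := div_nonneg ht hw.le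
  have hℓv : ℓ ((t / ℓ v) • v) = t := by simp [hv.ne']
  have hℓw : ℓ ((t / ℓ w) • w) = t := by simp [hw.ne']
  calc g (a • v + b • w)
      ≤ max (g ((t / ℓ v) • v)) (g ((t / ℓ w) • w)) :=
        hg.le_on_segment (hvs _ hcv) (hws _ hcw) (smul_add_smul_mem_segment_div_smul ℓ hv hw ha hb)
    _ ≤ φ t := max_le ((hgv _ hcv).trans_eq (by rw [hℓv])) ((hgw _ hcw).trans_eq (by rw [hℓw]))

end Segment

def wedge (p q : ℝ) : Set (ℝ × ℝ) := {x | 0 ≤ x.1 ∧ 0 ≤ x.2 ∧ p * x.1 ≤ x.2 ∧ x.2 ≤ q * x.1}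

section Wedge

variable {p q : ℝ}

theorem convex_wedge (p q : ℝ) : Convex ℝ (wedge p q) := by
  rintro x ⟨hx₁, hx₂, hxp, hxq⟩ y ⟨hy₁, hy₂, hyp, hyq⟩ a b ha hb -
  simp only [wedge, Set.mem_ofPred_eq, Prod.fst_add, Prod.snd_add, Prod.smul_fst, Prod.smul_snd,
    smul_eq_mul]
  refine ⟨by positivity, by positivity, ?_, ?_⟩
  · linarith [mul_le_mul_of_nonneg_left hxp ha, mul_le_mul_of_nonneg_left hyp hb]
  · linarith [mul_le_mul_of_nonneg_left hxq ha, mul_le_mul_of_nonneg_left hyq hb]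

theorem mem_wedge_of_ray (hp : 0 ≤ p) (hpq : p ≤ q) {x : ℝ × ℝ} (hx : 0 ≤ x.1)
    (hray : x.2 = p * x.1 ∨ x.2 = q * x.1) : x ∈ wedge p q := by
  have hpx := mul_nonneg hp hx
  have := mul_le_mul_of_nonneg_right hpq hx
  rcases hray with h | h <;> exact ⟨hx, by linarith, by linarith, by linarith⟩

theorem smul_mem_wedge_left (hp : 0 ≤ p) (hpq : p ≤ q) {c : ℝ} (hc : 0 ≤ c) :
    c • ((1 : ℝ), p) ∈ wedge p q :=
  mem_wedge_of_ray hp hpq (by simpa using hc) (Or.inl (by simp [mul_comm]))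

theorem smul_mem_wedge_right (hp : 0 ≤ p) (hpq : p ≤ q) {c : ℝ} (hc : 0 ≤ c) :
    c • ((1 : ℝ), q) ∈ wedge p q :=
  mem_wedge_of_ray hp hpq (by simpa using hc) (Or.inr (by simp [mul_comm]))

theorem exists_smul_add_smul_of_mem_wedge (hpq : p < q) {x : ℝ × ℝ} (hx : x ∈ wedge p q) :
    ∃ a b : ℝ, 0 ≤ a ∧ 0 ≤ b ∧ a • ((1 : ℝ), p) + b • ((1 : ℝ), q) = x := by
  obtain ⟨-, -, hxp, hxq⟩ := hx
  have hqp : 0 < q - p := sub_pos.2 hpq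
  refine ⟨(q * x.1 - x.2) / (q - p), (x.2 - p * x.1) / (q - p),
    div_nonneg (by linarith) hqp.le, div_nonneg (by linarith) hqp.le, ?_⟩
  ext <;> simp <;> field_simp <;> ring

theorem exists_mem_Icc_eq_mk_mul_of_mem_wedge (hpq : p ≤ q) {x : ℝ × ℝ} (hx : x ∈ wedge p q) :
    ∃ t ∈ Set.Icc p q, x = (x.1, t * x.1) := by
  obtain ⟨hx₁, hx₂, hxp, hxq⟩ := hx
  rcases hx₁.eq_or_lt with h0 | h0
  · exact ⟨p, ⟨le_rfl, hpq⟩, Prod.ext rfl (by simp only [← h0, mul_zero] at hxq ⊢; linarith)⟩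
  · refine ⟨x.2 / x.1, ⟨(le_div_iff₀ h0).2 hxp, (div_le_iff₀ h0).2 hxq⟩, ?_⟩
    ext
    · rfl
    · simp [h0.ne']

theorem ConvexOn.le_comp_of_le_on_wedge_edges (hp : 0 ≤ p) (hpq : p < q) {g : ℝ × ℝ → ℝ}
    (hg : ConvexOn ℝ (wedge p q) g) (ℓ : ℝ × ℝ →ₗ[ℝ] ℝ) (φ : ℝ → ℝ) (hℓp : 0 < ℓ (1, p))
    (hℓq : 0 < ℓ (1, q))
    (hedge : ∀ y ∈ wedge p q, (y.2 = p * y.1 ∨ y.2 = q * y.1) → g y ≤ φ (ℓ y))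
    {x : ℝ × ℝ} (hx : x ∈ wedge p q) : g x ≤ φ (ℓ x) := by
  obtain ⟨a, b, ha, hb, rfl⟩ := exists_smul_add_smul_of_mem_wedge hpq hx
  refine hg.le_comp_of_le_on_edges ℓ φ hℓp hℓq (fun c => smul_mem_wedge_left hp hpq.le)
    (fun c => smul_mem_wedge_right hp hpq.le) (fun c hc => ?_) (fun c hc => ?_) ha hb
  · exact hedge _ (smul_mem_wedge_left hp hpq.le hc) (Or.inl (by simp [mul_comm]))
  · exact hedge _ (smul_mem_wedge_right hp hpq.le hc) (Or.inr (by simp [mul_comm]))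

end Wedge

noncomputable def geomMean (γ : ℝ) (x : ℝ × ℝ) : ℝ := x.1 ^ (1 - γ) * x.2 ^ γ

theorem geomMean_mk_mul (γ : ℝ) {s t : ℝ} (hs : 0 ≤ s) (ht : 0 ≤ t) :
    geomMean γ (s, t * s) = t ^ γ * s := by
  rw [geomMean, mul_rpow ht hs, mul_left_comm, ← rpow_add' hs (by norm_num), sub_add_cancel,
    rpow_one]

theorem geomMean_rpow (γ β : ℝ) {x : ℝ × ℝ} (hx₁ : 0 ≤ x.1) (hx₂ : 0 ≤ x.2) :
    geomMean γ x ^ β = x.1 ^ ((1 - γ) * β) * x.2 ^ (γ * β) := by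
  rw [geomMean, mul_rpow (rpow_nonneg hx₁ _) (rpow_nonneg hx₂ _), ← rpow_mul hx₁, ← rpow_mul hx₂]

/-- The linear function on `ℝ²` that agrees with `geomMean γ` on the two edges of `wedge p q`. -/
noncomputable def edgeInterp (γ p q : ℝ) : ℝ × ℝ →ₗ[ℝ] ℝ where
  toFun x := (p ^ γ * (q * x.1 - x.2) + q ^ γ * (x.2 - p * x.1)) / (q - p)
  map_add' x y := by simp only [Prod.fst_add, Prod.snd_add]; ring
  map_smul' c x := by
    simp only [Prod.smul_fst, Prod.smul_snd, smul_eq_mul, RingHom.id_apply]; ring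

section EdgeInterp

variable {γ p q : ℝ}

theorem edgeInterp_apply (x : ℝ × ℝ) :
    edgeInterp γ p q x = (p ^ γ * (q * x.1 - x.2) + q ^ γ * (x.2 - p * x.1)) / (q - p) :=
  rfl

theorem edgeInterp_one_left (hpq : p < q) : edgeInterp γ p q (1, p) = p ^ γ := by
  rw [edgeInterp_apply]; field_simp [(sub_pos.2 hpq).ne']; ring

theorem edgeInterp_one_right (hpq : p < q) : edgeInterp γ p q (1, q) = q ^ γ := by
  rw [edgeInterp_apply]; field_simp [(sub_pos.2 hpq).ne']; ring

theorem edgeInterp_mk_mul (s t : ℝ) :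
    edgeInterp γ p q (s, t * s) = (p ^ γ * (q - t) + q ^ γ * (t - p)) / (q - p) * s := by
  rw [edgeInterp_apply]; ring

theorem edgeInterp_nonneg (hp : 0 ≤ p) (hpq : p < q) {x : ℝ × ℝ} (hx : x ∈ wedge p q) :
    0 ≤ edgeInterp γ p q x := by
  obtain ⟨-, -, hxp, hxq⟩ := hx
  have hq' : 0 ≤ q * x.1 - x.2 := by linarith
  have hp' : 0 ≤ x.2 - p * x.1 := by linarith
  rw [edgeInterp_apply]
  exact div_nonneg (add_nonneg (mul_nonneg (rpow_nonneg hp γ) hq')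
    (mul_nonneg (rpow_nonneg (hp.trans hpq.le) γ) hp')) (sub_nonneg.2 hpq.le)

theorem secant_le_rpow (hγ₀ : 0 ≤ γ) (hγ₁ : γ ≤ 1) (hp : 0 ≤ p) (hpq : p < q) {t : ℝ}
    (ht : t ∈ Set.Icc p q) : (p ^ γ * (q - t) + q ^ γ * (t - p)) / (q - p) ≤ t ^ γ := by
  have hqp : 0 < q - p := sub_pos.2 hpq
  have key := (concaveOn_rpow hγ₀ hγ₁).2 (Set.mem_Ici.2 hp) (Set.mem_Ici.2 (hp.trans hpq.le))
    (div_nonneg (sub_nonneg.2 ht.2) hqp.le) (div_nonneg (sub_nonneg.2 ht.1) hqp.le)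
    (by field_simp; ring)
  have hcomb : (q - t) / (q - p) * p + (t - p) / (q - p) * q = t := by field_simp; ring
  simp only [smul_eq_mul, hcomb] at key
  calc (p ^ γ * (q - t) + q ^ γ * (t - p)) / (q - p)
      = (q - t) / (q - p) * p ^ γ + (t - p) / (q - p) * q ^ γ := by ring
    _ ≤ t ^ γ := key

theorem edgeInterp_le_geomMean (hγ₀ : 0 ≤ γ) (hγ₁ : γ ≤ 1) (hp : 0 ≤ p) (hpq : p < q)
    {x : ℝ × ℝ} (hx : x ∈ wedge p q) : edgeInterp γ p q x ≤ geomMean γ x := by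
  obtain ⟨t, ht, hxt⟩ := exists_mem_Icc_eq_mk_mul_of_mem_wedge hpq.le hx
  rw [hxt, edgeInterp_mk_mul, geomMean_mk_mul γ hx.1 (hp.trans ht.1)]
  exact mul_le_mul_of_nonneg_right (secant_le_rpow hγ₀ hγ₁ hp hpq ht) hx.1

theorem edgeInterp_eq_geomMean (hp : 0 ≤ p) (hpq : p < q) {x : ℝ × ℝ} (hx : 0 ≤ x.1)
    (hray : x.2 = p * x.1 ∨ x.2 = q * x.1) : edgeInterp γ p q x = geomMean γ x := by
  have hqp : q - p ≠ 0 := (sub_pos.2 hpq).ne'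
  rcases hray with h | h
  · rw [show x = (x.1, p * x.1) from Prod.ext rfl h, edgeInterp_mk_mul, geomMean_mk_mul γ hx hp]
    field_simp; ring
  · rw [show x = (x.1, q * x.1) from Prod.ext rfl h, edgeInterp_mk_mul,
      geomMean_mk_mul γ hx (hp.trans hpq.le)]
    field_simp; ring

theorem edgeInterp_eq_mul (hp : 0 < p) (hpq : p < q) (x : ℝ × ℝ) :
    edgeInterp γ p q x = (p * q) ^ γ / (q - p) *
      ((q ^ (1 - γ) - p ^ (1 - γ)) * x.1 - (q ^ (-γ) - p ^ (-γ)) * x.2) := by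
  have hq := hp.trans hpq
  have := rpow_pos_of_pos hp γ
  have := rpow_pos_of_pos hq γ
  rw [edgeInterp_apply, rpow_sub hp, rpow_sub hq, rpow_neg hp.le, rpow_neg hq.le,
    mul_rpow hp.le hq.le, rpow_one, rpow_one]
  field_simp
  ring

theorem rpow_div_mul_rpow_eq_edgeInterp_rpow {d₁ d₂ : ℝ} (hp : 0 < p) (hpq : p < q)
    (hd₁ : d₁ = q ^ (-γ) - p ^ (-γ)) (hd₂ : d₂ = q ^ (1 - γ) - p ^ (1 - γ)) (β : ℝ)
    {x : ℝ × ℝ} (hx : x ∈ wedge p q) :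
    p ^ (γ * β) / (d₂ - d₁ * p) ^ β * (d₂ * x.1 - d₁ * x.2) ^ β = edgeInterp γ p q x ^ β := by
  set c := (p * q) ^ γ / (q - p)
  have hc : 0 < c := div_pos (rpow_pos_of_pos (mul_pos hp (hp.trans hpq)) γ) (sub_pos.2 hpq)
  have hL : ∀ y : ℝ × ℝ, edgeInterp γ p q y = c * (d₂ * y.1 - d₁ * y.2) := by
    intro y; rw [edgeInterp_eq_mul hp hpq, hd₁, hd₂]
  have hLp : p ^ γ = c * (d₂ - d₁ * p) := by
    simpa [edgeInterp_one_left hpq] using hL (1, p)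
  have hu₁ : 0 < d₂ - d₁ * p := pos_of_mul_pos_right (hLp ▸ rpow_pos_of_pos hp γ) hc.le
  have hux : 0 ≤ d₂ * x.1 - d₁ * x.2 :=
    nonneg_of_mul_nonneg_right (hL x ▸ edgeInterp_nonneg hp.le hpq hx) hc
  rw [rpow_mul hp.le, hLp, mul_rpow hc.le hu₁.le,
    mul_div_cancel_right₀ _ (rpow_pos_of_pos hu₁ β).ne', ← mul_rpow hc.le hux, ← hL]

end EdgeInterp

/-- For `n = 2` and `β = a₁ + a₂ ≥ 1`, `f′_ℓ(x) = λ (d₂ x₁ − d₁ x₂)^β`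
is the lower envelope of `f` over `W₁₂`: it is convex on `W₁₂`, a minorant of `f` on
`W₁₂`, agrees with `f` on the rays `x₂ = p x₁` and `x₂ = q x₁`, and dominates every
convex minorant of `f` on `W₁₂`. -/
theorem lower_envelope_W12_of_one_le_beta (a₁ a₂ p q β d₁ d₂ lam : ℝ)
    (ha₁ : 0 < a₁) (ha₂ : 0 < a₂) (hβ : β = a₁ + a₂) (hβ1 : 1 ≤ β)
    (hp : 0 < p) (hpq : p < q)
    (hd₁ : d₁ = q ^ (-(a₂ / β)) - p ^ (-(a₂ / β)))
    (hd₂ : d₂ = q ^ (a₁ / β) - p ^ (a₁ / β))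
    (hlam : lam = p ^ a₂ / (d₂ - d₁ * p) ^ β) :
    ConvexOn ℝ {x : ℝ × ℝ | 0 ≤ x.1 ∧ 0 ≤ x.2 ∧ p * x.1 ≤ x.2 ∧ x.2 ≤ q * x.1}
      (fun x : ℝ × ℝ => lam * (d₂ * x.1 - d₁ * x.2) ^ β) ∧
    (∀ x : ℝ × ℝ, (0 ≤ x.1 ∧ 0 ≤ x.2 ∧ p * x.1 ≤ x.2 ∧ x.2 ≤ q * x.1) →
      lam * (d₂ * x.1 - d₁ * x.2) ^ β ≤ x.1 ^ a₁ * x.2 ^ a₂) ∧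
    (∀ x : ℝ × ℝ, 0 ≤ x.1 → 0 ≤ x.2 → (x.2 = p * x.1 ∨ x.2 = q * x.1) →
      lam * (d₂ * x.1 - d₁ * x.2) ^ β = x.1 ^ a₁ * x.2 ^ a₂) ∧
    (∀ g : ℝ × ℝ → ℝ,
      ConvexOn ℝ {x : ℝ × ℝ | 0 ≤ x.1 ∧ 0 ≤ x.2 ∧ p * x.1 ≤ x.2 ∧ x.2 ≤ q * x.1} g →
      (∀ x : ℝ × ℝ, (0 ≤ x.1 ∧ 0 ≤ x.2 ∧ p * x.1 ≤ x.2 ∧ x.2 ≤ q * x.1) →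
        g x ≤ x.1 ^ a₁ * x.2 ^ a₂) →
      ∀ x : ℝ × ℝ, (0 ≤ x.1 ∧ 0 ≤ x.2 ∧ p * x.1 ≤ x.2 ∧ x.2 ≤ q * x.1) →
        g x ≤ lam * (d₂ * x.1 - d₁ * x.2) ^ β) := by
  have hβ0 : 0 < β := by linarith
  set γ := a₂ / β
  have hγβ : γ * β = a₂ := div_mul_cancel₀ a₂ hβ0.ne'
  have h1γ : 1 - γ = a₁ / β := by field_simp; linarith
  have hγ₀ : 0 ≤ γ := by positivity
  have hγ₁ : γ ≤ 1 := div_le_one_of_le₀ (by linarith) hβ0.le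
  set L := edgeInterp γ p q
  have hL₀ : ∀ x ∈ wedge p q, 0 ≤ L x := fun x hx => edgeInterp_nonneg hp.le hpq hx
  have hF : ∀ x ∈ wedge p q, lam * (d₂ * x.1 - d₁ * x.2) ^ β = L x ^ β := fun x hx => by
    rw [hlam, ← hγβ]
    exact rpow_div_mul_rpow_eq_edgeInterp_rpow hp hpq hd₁ (h1γ ▸ hd₂) β hx
  have hf : ∀ x ∈ wedge p q, x.1 ^ a₁ * x.2 ^ a₂ = geomMean γ x ^ β := fun x hx => by
    rw [geomMean_rpow γ β hx.1 hx.2.1, hγβ, h1γ, div_mul_cancel₀ a₁ hβ0.ne']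
  have hray : ∀ x ∈ wedge p q, (x.2 = p * x.1 ∨ x.2 = q * x.1) →
      x.1 ^ a₁ * x.2 ^ a₂ = L x ^ β := fun x hx h => by
    rw [hf x hx, edgeInterp_eq_geomMean hp.le hpq hx.1 h]
  refine ⟨?_, fun x hx => ?_, fun x hx₁ _ h => ?_, fun g hg hgf x hx => ?_⟩
  · exact (((convexOn_rpow hβ1).comp_linearMap L).subset hL₀ (convex_wedge p q)).congr
      fun x hx => (hF x hx).symm
  · rw [hF x hx, hf x hx]
    exact rpow_le_rpow (hL₀ x hx) (edgeInterp_le_geomMean hγ₀ hγ₁ hp.le hpq hx) hβ0.le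
  · have hx := mem_wedge_of_ray hp.le hpq.le hx₁ h
    rw [hF x hx, hray x hx h]
  · rw [hF x hx]
    exact hg.le_comp_of_le_on_wedge_edges hp.le hpq L (· ^ β)
      (edgeInterp_one_left hpq ▸ rpow_pos_of_pos hp γ)
      (edgeInterp_one_right hpq ▸ rpow_pos_of_pos (hp.trans hpq) γ)
      (fun y hy h => (hgf y hy).trans_eq (hray y hy h)) hx
end

section
/- Suppose β ≤ 1, and define f″_ℓ(x) = ζ (d_j xᵢ − dᵢ x_j)^{(aᵢ+a_j)/β} (∏_{k ∉ {i,j}} x_k^{a_k})^{1/β} + z₀, where ζ = λ^{1/β} (u − ℓ)/(u^{1/β} − ℓ^{1/β}). Then f″_ℓ(x) = f(x) for every x ∈ ℝ₊ⁿ such that (x_j = p xᵢ or x_j = q xᵢ) and f(x) ∈ {ℓ, u}. -/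
open Real Finset

/-!
On each of the rays `x_j = p xᵢ` and `x_j = q xᵢ` the linear form `d_j xᵢ − dᵢ x_j` is a multiple
of `xᵢ`, and the coefficients `dᵢ, d_j` are chosen so that `λ (d_j xᵢ − dᵢ x_j)^(aᵢ+a_j)` equals
`xᵢ^aᵢ x_j^a_j` on both rays. Hence `f″_ℓ(x) = c f(x)^(1/β) + z₀` there, with
`c = (u − ℓ)/(u^(1/β) − ℓ^(1/β))`, and `t ↦ c t^(1/β) + z₀` is the interpolation through
`(ℓ, ℓ)` and `(u, u)` in the variable `t^(1/β)`.
-/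

lemma rpow_neg_div_add_mul_self {a b r : ℝ} (hab : a + b ≠ 0) (hr : 0 < r) :
    r ^ (-(b / (a + b))) * r = r ^ (a / (a + b)) := by
  rw [← rpow_add_one hr.ne']
  congr 1
  field_simp
  ring

lemma rpow_neg_div_add_mul_rpow {a b r w : ℝ} (hab : a + b ≠ 0) (hr : 0 < r) (hw : 0 ≤ w) :
    (r ^ (-(b / (a + b))) * w) ^ (a + b) = r ^ (-b) * w ^ (a + b) := by
  rw [mul_rpow (rpow_nonneg hr.le _) hw, ← rpow_mul hr.le]
  congr 2
  field_simp

section RayCoefficients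

variable {a b p q di dj : ℝ}

lemma sub_mul_left_eq_of_ray_coeffs (hab : a + b ≠ 0) (hp : 0 < p) (hq : 0 < q)
    (hdi : di = q ^ (-(b / (a + b))) - p ^ (-(b / (a + b))))
    (hdj : dj = q ^ (a / (a + b)) - p ^ (a / (a + b))) :
    dj - di * p = q ^ (-(b / (a + b))) * (q - p) := by
  rw [hdi, hdj]
  linear_combination rpow_neg_div_add_mul_self hab hp - rpow_neg_div_add_mul_self hab hq

lemma sub_mul_right_eq_of_ray_coeffs (hab : a + b ≠ 0) (hp : 0 < p) (hq : 0 < q)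
    (hdi : di = q ^ (-(b / (a + b))) - p ^ (-(b / (a + b))))
    (hdj : dj = q ^ (a / (a + b)) - p ^ (a / (a + b))) :
    dj - di * q = p ^ (-(b / (a + b))) * (q - p) := by
  rw [hdi, hdj]
  linear_combination rpow_neg_div_add_mul_self hab hp - rpow_neg_div_add_mul_self hab hq

lemma sub_mul_pos_of_ray_coeffs {r : ℝ} (hab : a + b ≠ 0) (hp : 0 < p) (hpq : p < q)
    (hdi : di = q ^ (-(b / (a + b))) - p ^ (-(b / (a + b))))
    (hdj : dj = q ^ (a / (a + b)) - p ^ (a / (a + b))) (hr : r = p ∨ r = q) :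
    0 < dj - di * r := by
  have hq : 0 < q := hp.trans hpq
  rcases hr with rfl | rfl
  · rw [sub_mul_left_eq_of_ray_coeffs hab hp hq hdi hdj]
    exact mul_pos (rpow_pos_of_pos hq _) (sub_pos.mpr hpq)
  · rw [sub_mul_right_eq_of_ray_coeffs hab hp hq hdi hdj]
    exact mul_pos (rpow_pos_of_pos hp _) (sub_pos.mpr hpq)

lemma div_rpow_mul_rpow_sub_mul_of_ray_coeffs {r : ℝ} (hab : a + b ≠ 0) (hp : 0 < p)
    (hpq : p < q) (hdi : di = q ^ (-(b / (a + b))) - p ^ (-(b / (a + b))))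
    (hdj : dj = q ^ (a / (a + b)) - p ^ (a / (a + b))) (hr : r = p ∨ r = q) :
    p ^ b / (dj - di * p) ^ (a + b) * (dj - di * r) ^ (a + b) = r ^ b := by
  have hq : 0 < q := hp.trans hpq
  have hW : 0 < (q - p) ^ (a + b) := rpow_pos_of_pos (sub_pos.mpr hpq) _
  rcases hr with rfl | rfl
  · have := sub_mul_pos_of_ray_coeffs hab hp hpq hdi hdj (.inl rfl)
    exact div_mul_cancel₀ _ (rpow_pos_of_pos this _).ne'
  · rw [sub_mul_left_eq_of_ray_coeffs hab hp hq hdi hdj,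
      sub_mul_right_eq_of_ray_coeffs hab hp hq hdi hdj,
      rpow_neg_div_add_mul_rpow hab hq (sub_pos.mpr hpq).le,
      rpow_neg_div_add_mul_rpow hab hp (sub_pos.mpr hpq).le, rpow_neg hq.le, rpow_neg hp.le]
    have := rpow_pos_of_pos hp b
    have := rpow_pos_of_pos hq b
    field_simp

lemma div_rpow_mul_rpow_linear_of_ray {r x : ℝ} (hab : a + b ≠ 0) (hp : 0 < p)
    (hpq : p < q) (hdi : di = q ^ (-(b / (a + b))) - p ^ (-(b / (a + b))))
    (hdj : dj = q ^ (a / (a + b)) - p ^ (a / (a + b))) (hr : r = p ∨ r = q) (hx : 0 ≤ x) :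
    p ^ b / (dj - di * p) ^ (a + b) * (dj * x - di * (r * x)) ^ (a + b) = x ^ a * (r * x) ^ b := by
  have hr0 : 0 ≤ r := by rcases hr with rfl | rfl <;> linarith
  rw [show dj * x - di * (r * x) = (dj - di * r) * x by ring,
    mul_rpow (sub_mul_pos_of_ray_coeffs hab hp hpq hdi hdj hr).le hx, ← mul_assoc,
    div_rpow_mul_rpow_sub_mul_of_ray_coeffs hab hp hpq hdi hdj hr, mul_rpow hr0 hx,
    rpow_add' hx hab]
  ring

end RayCoefficients

lemma secant_rpow_eq_self {ℓ u t γ : ℝ} (h : ℓ ^ γ ≠ u ^ γ) (ht : t = ℓ ∨ t = u) :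
    (u - ℓ) / (u ^ γ - ℓ ^ γ) * t ^ γ + (u ^ γ * ℓ - ℓ ^ γ * u) / (u ^ γ - ℓ ^ γ) = t := by
  have h' : u ^ γ - ℓ ^ γ ≠ 0 := sub_ne_zero.mpr h.symm
  rcases ht with rfl | rfl <;> field_simp <;> ring

theorem second_lower_matches_general (n : ℕ) (a : Fin n → ℝ)
    (ha : ∀ k, 0 < a k) (ℓ u : ℝ) (hℓ : 0 < ℓ) (hℓu : ℓ < u)
    (i j : Fin n) (hij : i ≠ j) (p q : ℝ) (hp : 0 < p) (hpq : p < q)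
    (β di dj lam z₀ ζ : ℝ) (hβ : β = ∑ k, a k)
    (hdi : di = q ^ (-(a j / (a i + a j))) - p ^ (-(a j / (a i + a j))))
    (hdj : dj = q ^ (a i / (a i + a j)) - p ^ (a i / (a i + a j)))
    (hlam : lam = p ^ a j / (dj - di * p) ^ (a i + a j))
    (hz₀ : z₀ = (u ^ (1 / β) * ℓ - ℓ ^ (1 / β) * u) / (u ^ (1 / β) - ℓ ^ (1 / β)))
    (hζ : ζ = lam ^ (1 / β) * (u - ℓ) / (u ^ (1 / β) - ℓ ^ (1 / β))) :
    ∀ x : Fin n → ℝ, (∀ k, 0 ≤ x k) →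
      (x j = p * x i ∨ x j = q * x i) →
      ((∏ k, x k ^ a k) = ℓ ∨ (∏ k, x k ^ a k) = u) →
      ζ * (dj * x i - di * x j) ^ ((a i + a j) / β) *
          (∏ k ∈ ({i, j} : Finset (Fin n))ᶜ, x k ^ a k) ^ (1 / β) + z₀ =
        ∏ k, x k ^ a k := by
  intro x hx hline hf
  obtain ⟨r, hr, hxj⟩ : ∃ r, (r = p ∨ r = q) ∧ x j = r * x i :=
    hline.elim (fun h => ⟨p, .inl rfl, h⟩) (fun h => ⟨q, .inr rfl, h⟩)
  have hs : a i + a j ≠ 0 := (add_pos (ha i) (ha j)).ne'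
  have hβ0 : 0 < β := hβ ▸ sum_pos (fun k _ => ha k) ⟨i, mem_univ i⟩
  have hlam0 : 0 ≤ lam := hlam ▸ div_nonneg (rpow_nonneg hp.le _)
    (rpow_nonneg (sub_mul_pos_of_ray_coeffs hs hp hpq hdi hdj (.inl rfl)).le _)
  have hT : 0 ≤ dj * x i - di * x j := by
    rw [hxj, show dj * x i - di * (r * x i) = (dj - di * r) * x i by ring]
    exact mul_nonneg (sub_mul_pos_of_ray_coeffs hs hp hpq hdi hdj hr).le (hx i)
  have hR : 0 ≤ ∏ k ∈ ({i, j} : Finset (Fin n))ᶜ, x k ^ a k :=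
    prod_nonneg fun k _ => rpow_nonneg (hx k) _
  have hray : lam * (dj * x i - di * x j) ^ (a i + a j) = x i ^ a i * x j ^ a j := by
    rw [hlam, hxj]
    exact div_rpow_mul_rpow_linear_of_ray hs hp hpq hdi hdj hr (hx i)
  have hfactor : lam ^ (1 / β) * (dj * x i - di * x j) ^ ((a i + a j) / β) *
      (∏ k ∈ ({i, j} : Finset (Fin n))ᶜ, x k ^ a k) ^ (1 / β) = (∏ k, x k ^ a k) ^ (1 / β) := by
    rw [← prod_mul_prod_compl {i, j}, prod_pair hij, ← hray, div_eq_mul_one_div (a i + a j),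
      rpow_mul hT, ← mul_rpow hlam0 (rpow_nonneg hT _),
      ← mul_rpow (mul_nonneg hlam0 (rpow_nonneg hT _)) hR]
  have hℓu' : ℓ ^ (1 / β) ≠ u ^ (1 / β) := (rpow_lt_rpow hℓ.le hℓu (by positivity)).ne
  rw [hζ, hz₀, ← secant_rpow_eq_self hℓu' hf, ← hfactor]
  ring

/-- For `β ≤ 1`, `f″_ℓ` matches `f` at points of
`(P_{ij} ∪ Q_{ij}) ∩ (C_ℓ ∪ C_u)`. -/
theorem second_lower_matches (n : ℕ) (hn : 2 ≤ n) (a : Fin n → ℝ)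
    (ha : ∀ k, 0 < a k) (ℓ u : ℝ) (hℓ : 0 < ℓ) (hℓu : ℓ < u)
    (i j : Fin n) (hij : i ≠ j) (p q : ℝ) (hp : 0 < p) (hpq : p < q)
    (β di dj lam z₀ ζ : ℝ) (hβ : β = ∑ k, a k) (hβ1 : β ≤ 1)
    (hdi : di = q ^ (-(a j / (a i + a j))) - p ^ (-(a j / (a i + a j))))
    (hdj : dj = q ^ (a i / (a i + a j)) - p ^ (a i / (a i + a j)))
    (hlam : lam = p ^ a j / (dj - di * p) ^ (a i + a j))
    (hz₀ : z₀ = (u ^ (1 / β) * ℓ - ℓ ^ (1 / β) * u) / (u ^ (1 / β) - ℓ ^ (1 / β)))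
    (hζ : ζ = lam ^ (1 / β) * (u - ℓ) / (u ^ (1 / β) - ℓ ^ (1 / β))) :
    ∀ x : Fin n → ℝ, (∀ k, 0 ≤ x k) →
      (x j = p * x i ∨ x j = q * x i) →
      ((∏ k, x k ^ a k) = ℓ ∨ (∏ k, x k ^ a k) = u) →
      ζ * (dj * x i - di * x j) ^ ((a i + a j) / β) *
          (∏ k ∈ ({i, j} : Finset (Fin n))ᶜ, x k ^ a k) ^ (1 / β) + z₀ =
        ∏ k, x k ^ a k :=
  second_lower_matches_general n a ha ℓ u hℓ hℓu i j hij p q hp hpq β di dj lam z₀ ζ hβ hdi hdj hlam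
    hz₀ hζ
end

section
/- Suppose β ≤ 1, and define f″_ℓ(x) = ζ (d_j xᵢ − dᵢ x_j)^{(aᵢ+a_j)/β} (∏_{k ∉ {i,j}} x_k^{a_k})^{1/β} + z₀, where ζ = λ^{1/β} (u − ℓ)/(u^{1/β} − ℓ^{1/β}). Then f″_ℓ(x) ≤ f(x) for every x ∈ X ∩ W_{ij}. -/
open Real Finset

/-!
On the ray `x_j = t x_i`, `t ∈ [p, q]`, the secant of the concave map `t ↦ t ^ c`,
`c = a_j / (a_i + a_j)`, through `t = p` and `t = q` is `κ (d_j - d_i t)` with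
`κ = p^c q^c / (q - p)`, and `λ = κ ^ (a_i + a_j)`. Raising the secant bound to the power
`a_i + a_j` and using homogeneity gives `λ (d_j x_i - d_i x_j) ^ (a_i + a_j) ≤ x_i^a_i x_j^a_j`,
so `λ (d_j x_i - d_i x_j) ^ (a_i + a_j) ∏_{k ≠ i, j} x_k^a_k ≤ f(x)`. Taking `β`-th roots,
`f″_ℓ(x) ≤ g(f(x) ^ (1/β))` for the increasing affine `g` with `g(ℓ^(1/β)) = ℓ` and
`g(u^(1/β)) = u`; as `y ↦ y ^ β` is concave for `β ≤ 1`, `g(y) ≤ y ^ β` on `[ℓ^(1/β), u^(1/β)]`.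
-/

lemma rpow_secant_le {c A B t : ℝ} (hc₀ : 0 ≤ c) (hc₁ : c ≤ 1) (hA : 0 ≤ A)
    (hAB : A < B) (hAt : A ≤ t) (htB : t ≤ B) :
    (B - t) / (B - A) * A ^ c + (t - A) / (B - A) * B ^ c ≤ t ^ c := by
  have hBA : 0 < B - A := sub_pos.2 hAB
  have hcomb : (B - t) / (B - A) * A + (t - A) / (B - A) * B = t := by
    field_simp; ring
  have hw₁ : 0 ≤ (B - t) / (B - A) := div_nonneg (sub_nonneg.2 htB) hBA.le
  have hw₂ : 0 ≤ (t - A) / (B - A) := div_nonneg (sub_nonneg.2 hAt) hBA.le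
  have hw : (B - t) / (B - A) + (t - A) / (B - A) = 1 := by field_simp; ring
  simpa only [smul_eq_mul, hcomb] using (concaveOn_rpow hc₀ hc₁).2 (Set.mem_Ici.2 hA)
    (Set.mem_Ici.2 (hA.trans hAB.le)) hw₁ hw₂ hw

lemma secant_rpow_eq (c : ℝ) {p q : ℝ} (hp : 0 < p) (hpq : p < q) (t : ℝ) :
    (q - t) / (q - p) * p ^ c + (t - p) / (q - p) * q ^ c =
      p ^ c * q ^ c / (q - p) * ((q ^ (1 - c) - p ^ (1 - c)) - (q ^ (-c) - p ^ (-c)) * t) := by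
  have hq : 0 < q := hp.trans hpq
  have hqp : q - p ≠ 0 := (sub_pos.2 hpq).ne'
  have hpc : p ^ c ≠ 0 := (rpow_pos_of_pos hp c).ne'
  have hqc : q ^ c ≠ 0 := (rpow_pos_of_pos hq c).ne'
  rw [rpow_sub hp, rpow_sub hq, rpow_neg hp.le, rpow_neg hq.le, rpow_one, rpow_one]
  field_simp
  ring

lemma secant_form_nonneg {a b p q di dj x y : ℝ} (ha : 0 ≤ a) (hb : 0 ≤ b) (hp : 0 < p)
    (hpq : p ≤ q) (hdi : di = q ^ (-(b / (a + b))) - p ^ (-(b / (a + b))))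
    (hdj : dj = q ^ (a / (a + b)) - p ^ (a / (a + b))) (hx : 0 ≤ x) (hy : 0 ≤ y) :
    0 ≤ dj * x - di * y := by
  have hdj₀ : 0 ≤ dj := hdj ▸ sub_nonneg.2 (rpow_le_rpow hp.le hpq (by positivity))
  have hdi₀ : di ≤ 0 :=
    hdi ▸ sub_nonpos.2 (rpow_le_rpow_of_nonpos hp hpq (neg_nonpos.2 (by positivity)))
  nlinarith

lemma secant_form_rpow_le {a b p q di dj x y : ℝ} (ha : 0 < a) (hb : 0 < b) (hp : 0 < p)
    (hpq : p < q) (hdi : di = q ^ (-(b / (a + b))) - p ^ (-(b / (a + b))))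
    (hdj : dj = q ^ (a / (a + b)) - p ^ (a / (a + b)))
    (hx : 0 ≤ x) (hpy : p * x ≤ y) (hyq : y ≤ q * x) :
    p ^ b / (dj - di * p) ^ (a + b) * (dj * x - di * y) ^ (a + b) ≤ x ^ a * y ^ b := by
  have hs : 0 < a + b := add_pos ha hb
  set c := b / (a + b) with hc
  have hc₀ : 0 ≤ c := by positivity
  have hc₁ : c ≤ 1 := (div_le_one hs).2 (by linarith)
  have hcs : c * (a + b) = b := div_mul_cancel₀ b hs.ne'
  have h1c : 1 - c = a / (a + b) := by rw [hc]; field_simp; ring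
  set κ := p ^ c * q ^ c / (q - p)
  have hκ₀ : 0 < κ := div_pos (by positivity [hp.trans hpq]) (sub_pos.2 hpq)
  have hsec : ∀ t, κ * (dj - di * t) = (q - t) / (q - p) * p ^ c + (t - p) / (q - p) * q ^ c :=
    fun t ↦ by rw [hdi, hdj, ← h1c, secant_rpow_eq c hp hpq t]
  have hD : ∀ t, 0 ≤ t → 0 ≤ dj - di * t := fun t ht ↦ by
    simpa using secant_form_nonneg ha.le hb.le hp hpq.le hdi hdj zero_le_one ht
  have hκp : κ * (dj - di * p) = p ^ c := by
    rw [hsec]; field_simp [(sub_pos.2 hpq).ne']; ring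
  have hlam : p ^ b / (dj - di * p) ^ (a + b) = κ ^ (a + b) := by
    have hDp : 0 < dj - di * p := pos_of_mul_pos_right (hκp ▸ rpow_pos_of_pos hp c) hκ₀.le
    have hpb : p ^ b = (p ^ c) ^ (a + b) := by rw [← rpow_mul hp.le, hcs]
    rw [hpb, ← hκp, mul_rpow hκ₀.le hDp.le,
      mul_div_cancel_right₀ _ (rpow_pos_of_pos hDp _).ne']
  rcases hx.eq_or_lt with rfl | hx₀
  · obtain rfl : y = 0 := by linarith
    simp [zero_rpow hs.ne', zero_rpow ha.ne']
  have hy : 0 ≤ y := (mul_nonneg hp.le hx).trans hpy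
  set t := y / x with ht
  have hpt : p ≤ t := (le_div_iff₀ hx₀).2 hpy
  have htq : t ≤ q := (div_le_iff₀ hx₀).2 hyq
  have ht₀ : 0 ≤ t := hp.le.trans hpt
  have hform : dj * x - di * y = x * (dj - di * t) := by
    rw [ht]; field_simp
  calc p ^ b / (dj - di * p) ^ (a + b) * (dj * x - di * y) ^ (a + b)
      = x ^ (a + b) * (κ * (dj - di * t)) ^ (a + b) := by
        rw [hlam, hform, mul_rpow hx (hD t ht₀), mul_rpow hκ₀.le (hD t ht₀)]; ring
    _ ≤ x ^ (a + b) * (t ^ c) ^ (a + b) := by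
        gcongr
        · exact mul_nonneg hκ₀.le (hD t ht₀)
        · rw [hsec]; exact rpow_secant_le hc₀ hc₁ hp.le hpq hpt htq
    _ = x ^ a * y ^ b := by
        rw [← rpow_mul ht₀, hcs, ht, div_rpow hy hx, rpow_add hx₀]
        field_simp

lemma secant_rpow_inv_le {β ℓ u P : ℝ} (hβ₀ : 0 < β) (hβ₁ : β ≤ 1) (hℓ : 0 < ℓ) (hℓu : ℓ < u)
    (hℓP : ℓ ≤ P) (hPu : P ≤ u) :
    (u - ℓ) / (u ^ (1 / β) - ℓ ^ (1 / β)) * P ^ (1 / β) +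
        (u ^ (1 / β) * ℓ - ℓ ^ (1 / β) * u) / (u ^ (1 / β) - ℓ ^ (1 / β)) ≤ P := by
  have hβinv : 0 < 1 / β := one_div_pos.2 hβ₀
  have hLU : ℓ ^ (1 / β) < u ^ (1 / β) := rpow_lt_rpow hℓ.le hℓu hβinv
  have hsecant := rpow_secant_le hβ₀.le hβ₁ (rpow_nonneg hℓ.le _) hLU
    (rpow_le_rpow hℓ.le hℓP hβinv.le) (rpow_le_rpow (hℓ.trans_le hℓP).le hPu hβinv.le)
  rw [one_div, rpow_inv_rpow hℓ.le hβ₀.ne', rpow_inv_rpow (hℓ.trans hℓu).le hβ₀.ne',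
    rpow_inv_rpow (hℓ.trans_le hℓP).le hβ₀.ne'] at hsecant
  rw [one_div]
  convert hsecant using 1
  field_simp [(sub_pos.2 hLU).ne']
  ring

theorem second_lower_minorant_general (n : ℕ) (a : Fin n → ℝ)
    (ha : ∀ k, 0 < a k) (ℓ u : ℝ) (hℓ : 0 < ℓ) (hℓu : ℓ < u)
    (i j : Fin n) (hij : i ≠ j) (p q : ℝ) (hp : 0 < p) (hpq : p < q)
    (β di dj lam z₀ ζ : ℝ) (hβ : β = ∑ k, a k) (hβ1 : β ≤ 1)
    (hdi : di = q ^ (-(a j / (a i + a j))) - p ^ (-(a j / (a i + a j))))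
    (hdj : dj = q ^ (a i / (a i + a j)) - p ^ (a i / (a i + a j)))
    (hlam : lam = p ^ a j / (dj - di * p) ^ (a i + a j))
    (hz₀ : z₀ = (u ^ (1 / β) * ℓ - ℓ ^ (1 / β) * u) / (u ^ (1 / β) - ℓ ^ (1 / β)))
    (hζ : ζ = lam ^ (1 / β) * (u - ℓ) / (u ^ (1 / β) - ℓ ^ (1 / β))) :
    ∀ x : Fin n → ℝ, (∀ k, 0 ≤ x k) →
      ℓ ≤ (∏ k, x k ^ a k) → (∏ k, x k ^ a k) ≤ u →
      p * x i ≤ x j → x j ≤ q * x i →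
      ζ * (dj * x i - di * x j) ^ ((a i + a j) / β) *
          (∏ k ∈ ({i, j} : Finset (Fin n))ᶜ, x k ^ a k) ^ (1 / β) + z₀ ≤
        ∏ k, x k ^ a k := by
  intro x hx hl hu hpx hqx
  have hβ₀ : 0 < β := hβ ▸ sum_pos (fun k _ ↦ ha k) (univ_nonempty_iff.2 ⟨i⟩)
  set R := ∏ k ∈ ({i, j} : Finset (Fin n))ᶜ, x k ^ a k
  set X := dj * x i - di * x j
  have hR : 0 ≤ R := prod_nonneg fun k _ ↦ rpow_nonneg (hx k) _
  have hX : 0 ≤ X := secant_form_nonneg (ha i).le (ha j).le hp hpq.le hdi hdj (hx i) (hx j)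
  have hlam₀ : 0 ≤ lam := hlam ▸ div_nonneg (rpow_nonneg hp.le _) (rpow_nonneg (by
    simpa using secant_form_nonneg (ha i).le (ha j).le hp hpq.le hdi hdj zero_le_one hp.le) _)
  have hbound : lam * X ^ (a i + a j) * R ≤ ∏ k, x k ^ a k := by
    rw [← prod_mul_prod_compl {i, j}, prod_pair hij]
    exact mul_le_mul_of_nonneg_right
      (hlam ▸ secant_form_rpow_le (ha i) (ha j) hp hpq hdi hdj (hx i) hpx hqx) hR
  have hslope : 0 ≤ (u - ℓ) / (u ^ (1 / β) - ℓ ^ (1 / β)) := div_nonneg (sub_nonneg.2 hℓu.le)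
    (sub_nonneg.2 (rpow_le_rpow hℓ.le hℓu.le (one_div_pos.2 hβ₀).le))
  calc ζ * X ^ ((a i + a j) / β) * R ^ (1 / β) + z₀
      = (u - ℓ) / (u ^ (1 / β) - ℓ ^ (1 / β)) * (lam * X ^ (a i + a j) * R) ^ (1 / β) + z₀ := by
        rw [hζ, mul_rpow (by positivity) hR, mul_rpow hlam₀ (by positivity), ← rpow_mul hX,
          mul_one_div]
        ring
    _ ≤ (u - ℓ) / (u ^ (1 / β) - ℓ ^ (1 / β)) * (∏ k, x k ^ a k) ^ (1 / β) + z₀ := by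
        gcongr
    _ ≤ ∏ k, x k ^ a k := hz₀ ▸ secant_rpow_inv_le hβ₀ hβ1 hℓ hℓu hl hu

/-- For `β ≤ 1`, `f″_ℓ` is a minorant of `f` on `X ∩ W_{ij}`. -/
theorem second_lower_minorant (n : ℕ) (hn : 2 ≤ n) (a : Fin n → ℝ)
    (ha : ∀ k, 0 < a k) (ℓ u : ℝ) (hℓ : 0 < ℓ) (hℓu : ℓ < u)
    (i j : Fin n) (hij : i ≠ j) (p q : ℝ) (hp : 0 < p) (hpq : p < q)
    (β di dj lam z₀ ζ : ℝ) (hβ : β = ∑ k, a k) (hβ1 : β ≤ 1)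
    (hdi : di = q ^ (-(a j / (a i + a j))) - p ^ (-(a j / (a i + a j))))
    (hdj : dj = q ^ (a i / (a i + a j)) - p ^ (a i / (a i + a j)))
    (hlam : lam = p ^ a j / (dj - di * p) ^ (a i + a j))
    (hz₀ : z₀ = (u ^ (1 / β) * ℓ - ℓ ^ (1 / β) * u) / (u ^ (1 / β) - ℓ ^ (1 / β)))
    (hζ : ζ = lam ^ (1 / β) * (u - ℓ) / (u ^ (1 / β) - ℓ ^ (1 / β))) :
    ∀ x : Fin n → ℝ, (∀ k, 0 ≤ x k) →
      ℓ ≤ (∏ k, x k ^ a k) → (∏ k, x k ^ a k) ≤ u →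
      p * x i ≤ x j → x j ≤ q * x i →
      ζ * (dj * x i - di * x j) ^ ((a i + a j) / β) *
          (∏ k ∈ ({i, j} : Finset (Fin n))ᶜ, x k ^ a k) ^ (1 / β) + z₀ ≤
        ∏ k, x k ^ a k :=
  second_lower_minorant_general n a ha ℓ u hℓ hℓu i j hij p q hp hpq β di dj lam z₀ ζ hβ hβ1 hdi hdj
    hlam hz₀ hζ
end

section
/- Let n = 2 and β = a₁ + a₂ ≤ 1, and let f″_ℓ(x) = ζ (d₂ x₁ − d₁ x₂) + z₀ (an affine function). Let T = {x ∈ ℝ₊² : (x₂ = p x₁ or x₂ = q x₁) and x₁^{a₁} x₂^{a₂} ∈ {ℓ, u}} (a set of four points). Then every function g that is convex on conv(T) and satisfies g(x) ≤ x₁^{a₁} x₂^{a₂} for all x ∈ conv(T) also satisfies g(x) ≤ f″_ℓ(x) for all x ∈ conv(T); i.e., f″_ℓ is the lower envelope of f over conv(T). -/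
open Real

/-! On a ray `x₂ = r x₁` with `r ∈ {p, q}` we have `f = r^{a₂} x₁^β`, and the constants are chosen
so that `λ^{1/β} (d₂ - d₁ r) = r^{a₂/β}`. Hence there the affine function equals
`(u - ℓ) / (u^{1/β} - ℓ^{1/β}) · f^{1/β} + z₀`, an affine function of `f^{1/β}` that returns `f`
when `f ∈ {ℓ, u}`: it agrees with `f` on the four points of `T`. Then `g` minus it is convex
on `conv T`, so it attains its maximum over `conv T` on `T`, where it is `g - f ≤ 0`. -/

theorem ConvexOn.le_of_concaveOn_of_mem_convexHull {E : Type*} [AddCommGroup E] [Module ℝ E]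
    {s : Set E} {g h : E → ℝ} (hg : ConvexOn ℝ (convexHull ℝ s) g)
    (hh : ConcaveOn ℝ (convexHull ℝ s) h) (hle : ∀ y ∈ s, g y ≤ h y) {x : E}
    (hx : x ∈ convexHull ℝ s) : g x ≤ h x := by
  obtain ⟨y, hys, hxy⟩ := (hg.sub hh).exists_ge_of_mem_convexHull (subset_convexHull ℝ s) hx
  have := hle y hys
  simp only [Pi.sub_apply] at hxy
  linarith

theorem affine_interpolant_comp_eq_of_eq_or_eq {φ : ℝ → ℝ} {w v x : ℝ} (hφ : φ w ≠ φ v)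
    (hx : x = w ∨ x = v) :
    (v - w) / (φ v - φ w) * φ x + (φ v * w - φ w * v) / (φ v - φ w) = x := by
  have hne : φ v - φ w ≠ 0 := sub_ne_zero.2 hφ.symm
  rcases hx with rfl | rfl <;> field_simp <;> ring

theorem rpow_mul_rpow_div_sub_mul_eq_rpow {p q s r : ℝ} (hp : 0 < p) (hq : 0 < q) (hpq : p ≠ q)
    (hr : r = p ∨ r = q) :
    p ^ s * q ^ s / (q - p) * ((q ^ (1 - s) - p ^ (1 - s)) - (q ^ (-s) - p ^ (-s)) * r) =
      r ^ s := by
  have hP : 0 < p ^ s := rpow_pos_of_pos hp s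
  have hQ : 0 < q ^ s := rpow_pos_of_pos hq s
  have hqp : q - p ≠ 0 := sub_ne_zero.2 hpq.symm
  rw [rpow_sub hp, rpow_sub hq, rpow_neg hp.le, rpow_neg hq.le, rpow_one, rpow_one]
  rcases hr with rfl | rfl <;> field_simp <;> ring

theorem rpow_mul_mul_rpow {a₁ a₂ r t : ℝ} (hr : 0 ≤ r) (ht : 0 < t) :
    t ^ a₁ * (r * t) ^ a₂ = r ^ a₂ * t ^ (a₁ + a₂) := by
  rw [mul_rpow hr ht.le, rpow_add ht]
  ring

theorem rpow_mul_rpow_rpow_one_div {r t a β : ℝ} (hr : 0 ≤ r) (ht : 0 ≤ t) (hβ : β ≠ 0) :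
    (r ^ a * t ^ β) ^ (1 / β) = r ^ (a / β) * t := by
  rw [one_div, mul_rpow (by positivity) (by positivity), rpow_rpow_inv ht hβ, ← rpow_mul hr,
    div_eq_mul_inv]

theorem rpow_one_div_mul_sub_mul_eq_rpow {a₁ a₂ p q β d₁ d₂ lam r : ℝ} (hβ : β = a₁ + a₂)
    (hβ0 : β ≠ 0) (hp : 0 < p) (hpq : p < q)
    (hd₁ : d₁ = q ^ (-(a₂ / β)) - p ^ (-(a₂ / β)))
    (hd₂ : d₂ = q ^ (a₁ / β) - p ^ (a₁ / β))
    (hlam : lam = p ^ a₂ / (d₂ - d₁ * p) ^ β) (hr : r = p ∨ r = q) :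
    lam ^ (1 / β) * (d₂ - d₁ * r) = r ^ (a₂ / β) := by
  have hq : 0 < q := hp.trans hpq
  have ha₁β : a₁ / β = 1 - a₂ / β := by field_simp; linarith
  have hslope : ∀ r, r = p ∨ r = q →
      p ^ (a₂ / β) * q ^ (a₂ / β) / (q - p) * (d₂ - d₁ * r) = r ^ (a₂ / β) := fun r hr => by
    rw [hd₁, hd₂, ha₁β]
    exact rpow_mul_rpow_div_sub_mul_eq_rpow hp hq hpq.ne hr
  have hc : 0 < p ^ (a₂ / β) * q ^ (a₂ / β) / (q - p) := by
    have := sub_pos.2 hpq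
    positivity
  have hdp : 0 < d₂ - d₁ * p :=
    pos_of_mul_pos_right ((hslope p (Or.inl rfl)).symm ▸ rpow_pos_of_pos hp _) hc.le
  have hlam' : lam ^ (1 / β) = p ^ (a₂ / β) * q ^ (a₂ / β) / (q - p) := by
    rw [hlam, div_rpow (by positivity) (by positivity), ← rpow_mul hp.le, mul_one_div, one_div,
      rpow_rpow_inv hdp.le hβ0, div_eq_iff hdp.ne', hslope p (Or.inl rfl)]
  rw [hlam']
  exact hslope r hr

theorem affine_eq_rpow_mul_rpow_of_ray_of_level {a₁ a₂ ℓ u p q β d₁ d₂ lam z₀ ζ x₁ x₂ : ℝ}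
    (ha₁ : 0 < a₁) (ha₂ : 0 < a₂) (hβ : β = a₁ + a₂)
    (hℓ : 0 < ℓ) (hℓu : ℓ < u) (hp : 0 < p) (hpq : p < q)
    (hd₁ : d₁ = q ^ (-(a₂ / β)) - p ^ (-(a₂ / β)))
    (hd₂ : d₂ = q ^ (a₁ / β) - p ^ (a₁ / β))
    (hlam : lam = p ^ a₂ / (d₂ - d₁ * p) ^ β)
    (hz₀ : z₀ = (u ^ (1 / β) * ℓ - ℓ ^ (1 / β) * u) / (u ^ (1 / β) - ℓ ^ (1 / β)))
    (hζ : ζ = lam ^ (1 / β) * (u - ℓ) / (u ^ (1 / β) - ℓ ^ (1 / β)))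
    (hx₁ : 0 ≤ x₁) (hray : x₂ = p * x₁ ∨ x₂ = q * x₁)
    (hlev : x₁ ^ a₁ * x₂ ^ a₂ = ℓ ∨ x₁ ^ a₁ * x₂ ^ a₂ = u) :
    ζ * (d₂ * x₁ - d₁ * x₂) + z₀ = x₁ ^ a₁ * x₂ ^ a₂ := by
  obtain ⟨r, hr, rfl⟩ : ∃ r, (r = p ∨ r = q) ∧ x₂ = r * x₁ := by
    rcases hray with h | h
    exacts [⟨p, Or.inl rfl, h⟩, ⟨q, Or.inr rfl, h⟩]
  have hr₀ : 0 < r := by rcases hr with rfl | rfl <;> linarith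
  have hx₁₀ : 0 < x₁ := by
    refine hx₁.lt_of_ne' fun h₀ => ?_
    rw [h₀, zero_rpow ha₁.ne', zero_mul] at hlev
    rcases hlev with h | h <;> linarith
  have hβ0 : β ≠ 0 := by rw [hβ]; positivity
  have hroot : (x₁ ^ a₁ * (r * x₁) ^ a₂) ^ (1 / β) = r ^ (a₂ / β) * x₁ := by
    rw [rpow_mul_mul_rpow hr₀.le hx₁₀, ← hβ, rpow_mul_rpow_rpow_one_div hr₀.le hx₁₀.le hβ0]
  have hD : ℓ ^ (1 / β) ≠ u ^ (1 / β) :=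
    (rpow_lt_rpow hℓ.le hℓu (one_div_pos.2 (by rw [hβ]; positivity))).ne
  calc ζ * (d₂ * x₁ - d₁ * (r * x₁)) + z₀
      = (u - ℓ) / (u ^ (1 / β) - ℓ ^ (1 / β)) * (lam ^ (1 / β) * (d₂ - d₁ * r) * x₁) + z₀ := by
        rw [hζ]; ring
    _ = (u - ℓ) / (u ^ (1 / β) - ℓ ^ (1 / β)) * (x₁ ^ a₁ * (r * x₁) ^ a₂) ^ (1 / β) + z₀ := by
        rw [rpow_one_div_mul_sub_mul_eq_rpow hβ hβ0 hp hpq hd₁ hd₂ hlam hr, hroot]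
    _ = x₁ ^ a₁ * (r * x₁) ^ a₂ := by
        rw [hz₀]
        exact affine_interpolant_comp_eq_of_eq_or_eq (φ := fun c => c ^ (1 / β)) hD hlev

theorem second_lower_envelope_on_convT_general (a₁ a₂ ℓ u p q β d₁ d₂ lam z₀ ζ : ℝ)
    (ha₁ : 0 < a₁) (ha₂ : 0 < a₂) (hβ : β = a₁ + a₂)
    (hℓ : 0 < ℓ) (hℓu : ℓ < u) (hp : 0 < p) (hpq : p < q)
    (hd₁ : d₁ = q ^ (-(a₂ / β)) - p ^ (-(a₂ / β)))
    (hd₂ : d₂ = q ^ (a₁ / β) - p ^ (a₁ / β))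
    (hlam : lam = p ^ a₂ / (d₂ - d₁ * p) ^ β)
    (hz₀ : z₀ = (u ^ (1 / β) * ℓ - ℓ ^ (1 / β) * u) / (u ^ (1 / β) - ℓ ^ (1 / β)))
    (hζ : ζ = lam ^ (1 / β) * (u - ℓ) / (u ^ (1 / β) - ℓ ^ (1 / β))) :
    ∀ g : ℝ × ℝ → ℝ,
      ConvexOn ℝ
        (convexHull ℝ {x : ℝ × ℝ | (0 ≤ x.1 ∧ 0 ≤ x.2) ∧
          (x.2 = p * x.1 ∨ x.2 = q * x.1) ∧
          (x.1 ^ a₁ * x.2 ^ a₂ = ℓ ∨ x.1 ^ a₁ * x.2 ^ a₂ = u)}) g →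
      (∀ x ∈ convexHull ℝ {x : ℝ × ℝ | (0 ≤ x.1 ∧ 0 ≤ x.2) ∧
          (x.2 = p * x.1 ∨ x.2 = q * x.1) ∧
          (x.1 ^ a₁ * x.2 ^ a₂ = ℓ ∨ x.1 ^ a₁ * x.2 ^ a₂ = u)},
        g x ≤ x.1 ^ a₁ * x.2 ^ a₂) →
      ∀ x ∈ convexHull ℝ {x : ℝ × ℝ | (0 ≤ x.1 ∧ 0 ≤ x.2) ∧
          (x.2 = p * x.1 ∨ x.2 = q * x.1) ∧
          (x.1 ^ a₁ * x.2 ^ a₂ = ℓ ∨ x.1 ^ a₁ * x.2 ^ a₂ = u)},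
        g x ≤ ζ * (d₂ * x.1 - d₁ * x.2) + z₀ := by
  intro g hg hle x hx
  refine hg.le_of_concaveOn_of_mem_convexHull (h := fun x => ζ * (d₂ * x.1 - d₁ * x.2) + z₀)
    (((ζ • (d₂ • LinearMap.fst ℝ ℝ ℝ - d₁ • LinearMap.snd ℝ ℝ ℝ)).concaveOn
      (convex_convexHull ℝ _)).add (concaveOn_const z₀ (convex_convexHull ℝ _))) ?_ hx
  rintro ⟨x₁, x₂⟩ hT
  calc g (x₁, x₂) ≤ x₁ ^ a₁ * x₂ ^ a₂ := hle _ (subset_convexHull ℝ _ hT)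
    _ = ζ * (d₂ * x₁ - d₁ * x₂) + z₀ := (affine_eq_rpow_mul_rpow_of_ray_of_level ha₁ ha₂ hβ hℓ
        hℓu hp hpq hd₁ hd₂ hlam hz₀ hζ hT.1.1 hT.2.1 hT.2.2).symm

/-- For `n = 2` and `β = a₁ + a₂ ≤ 1`, the affine function
`f″_ℓ(x) = ζ (d₂ x₁ − d₁ x₂) + z₀` dominates every convex minorant of `f` on
`conv(T)`, where `T = (P₁₂ ∪ Q₁₂) ∩ (C_ℓ ∪ C_u)`. -/
theorem second_lower_envelope_on_convT (a₁ a₂ ℓ u p q β d₁ d₂ lam z₀ ζ : ℝ)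
    (ha₁ : 0 < a₁) (ha₂ : 0 < a₂) (hβ : β = a₁ + a₂) (hβ1 : β ≤ 1)
    (hℓ : 0 < ℓ) (hℓu : ℓ < u) (hp : 0 < p) (hpq : p < q)
    (hd₁ : d₁ = q ^ (-(a₂ / β)) - p ^ (-(a₂ / β)))
    (hd₂ : d₂ = q ^ (a₁ / β) - p ^ (a₁ / β))
    (hlam : lam = p ^ a₂ / (d₂ - d₁ * p) ^ β)
    (hz₀ : z₀ = (u ^ (1 / β) * ℓ - ℓ ^ (1 / β) * u) / (u ^ (1 / β) - ℓ ^ (1 / β)))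
    (hζ : ζ = lam ^ (1 / β) * (u - ℓ) / (u ^ (1 / β) - ℓ ^ (1 / β))) :
    ∀ g : ℝ × ℝ → ℝ,
      ConvexOn ℝ
        (convexHull ℝ {x : ℝ × ℝ | (0 ≤ x.1 ∧ 0 ≤ x.2) ∧
          (x.2 = p * x.1 ∨ x.2 = q * x.1) ∧
          (x.1 ^ a₁ * x.2 ^ a₂ = ℓ ∨ x.1 ^ a₁ * x.2 ^ a₂ = u)}) g →
      (∀ x ∈ convexHull ℝ {x : ℝ × ℝ | (0 ≤ x.1 ∧ 0 ≤ x.2) ∧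
          (x.2 = p * x.1 ∨ x.2 = q * x.1) ∧
          (x.1 ^ a₁ * x.2 ^ a₂ = ℓ ∨ x.1 ^ a₁ * x.2 ^ a₂ = u)},
        g x ≤ x.1 ^ a₁ * x.2 ^ a₂) →
      ∀ x ∈ convexHull ℝ {x : ℝ × ℝ | (0 ≤ x.1 ∧ 0 ≤ x.2) ∧
          (x.2 = p * x.1 ∨ x.2 = q * x.1) ∧
          (x.1 ^ a₁ * x.2 ^ a₂ = ℓ ∨ x.1 ^ a₁ * x.2 ^ a₂ = u)},
        g x ≤ ζ * (d₂ * x.1 - d₁ * x.2) + z₀ :=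
  second_lower_envelope_on_convT_general a₁ a₂ ℓ u p q β d₁ d₂ lam z₀ ζ ha₁ ha₂ hβ hℓ hℓu hp hpq hd₁
    hd₂ hlam hz₀ hζ
end

section
/- For n = 2, the convex hull of X ∩ W₁₂ equals Y = {x ∈ ℝ₊² : p x₁ ≤ x₂ ≤ q x₁, x₁^{a₁} x₂^{a₂} ≥ ℓ, and d₂ x₁ − d₁ x₂ ≤ (u/λ)^{1/β}}. -/
/-!
Put `s = a₂ / β`. Then `f = G ^ β` for the weighted geometric mean `G x = x₁ ^ (1 - s) * x₂ ^ s`,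
so `X ∩ W₁₂` is the band `ℓ ^ (1/β) ≤ G ≤ u ^ (1/β)` of the wedge. Let `c` be the linear function
that agrees with `G` on the two boundary rays of the wedge. Along each ray `G` is linear, and across
the rays it is `x₁ * t ^ s` with `t = x₂ / x₁`, so concavity of `t ↦ t ^ s` gives `c ≤ G` on the
wedge; hence the band lies in `{ℓ ^ (1/β) ≤ G, c ≤ u ^ (1/β)}`, a convex set because `log G` is
concave. Conversely, the line `c = c x` through a point `x` of that set meets the two rays at points
where `G = c x ≤ u ^ (1/β)`; if `G x > u ^ (1/β)`, the intermediate value theorem gives points on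
both sides of `x` on this line where `G = u ^ (1/β)`, and `x` is a convex combination of them.
Finally `c = p ^ s / (d₂ - d₁ p) * (d₂ x₁ - d₁ x₂)` and `λ ^ (1/β) = p ^ s / (d₂ - d₁ p)`.
-/

open Real Set

theorem smul_add_smul_mem_segment {E : Type*} [AddCommGroup E] [Module ℝ E] {α β a b : ℝ}
    (hα : 0 ≤ α) (hβ : 0 ≤ β) (ha : 0 < a) (hb : 0 < b) (v w : E) :
    α • v + β • w ∈ segment ℝ (((α * a + β * b) / a) • v) (((α * a + β * b) / b) • w) := by
  rcases (add_nonneg (mul_nonneg hα ha.le) (mul_nonneg hβ hb.le)).eq_or_lt with h | h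
  · obtain rfl : α = 0 := by nlinarith [mul_nonneg hβ hb.le]
    obtain rfl : β = 0 := by nlinarith
    simp
  · refine ⟨α * a / (α * a + β * b), β * b / (α * a + β * b), by positivity, by positivity,
      by field_simp, ?_⟩
    simp only [smul_smul]
    congr 2 <;> field_simp

theorem mem_convexHull_segment_inter_preimage {E : Type*} [AddCommGroup E] [Module ℝ E]
    [TopologicalSpace E] [IsTopologicalAddGroup E] [ContinuousSMul ℝ E] {f : E → ℝ} {a b x : E}
    {u : ℝ} (hf : ContinuousOn f (segment ℝ a b)) (hx : x ∈ segment ℝ a b) (ha : f a ≤ u)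
    (hb : f b ≤ u) (hxu : u ≤ f x) : x ∈ convexHull ℝ (segment ℝ a b ∩ f ⁻¹' {u}) := by
  let g : ℝ →ᵃ[ℝ] E := AffineMap.lineMap a b
  have hg : MapsTo g (Icc 0 1) (segment ℝ a b) := by
    rw [segment_eq_image_lineMap]; exact mapsTo_image g _
  rw [segment_eq_image_lineMap] at hx
  obtain ⟨θ, ⟨hθ0, hθ1⟩, rfl⟩ := hx
  have hfg : ContinuousOn (f ∘ g) (Icc 0 1) :=
    hf.comp AffineMap.lineMap_continuous.continuousOn hg
  obtain ⟨t₁, ht₁, hft₁⟩ := intermediate_value_Icc hθ0 (hfg.mono (Icc_subset_Icc le_rfl hθ1))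
    ⟨by simpa [g] using ha, hxu⟩
  obtain ⟨t₂, ht₂, hft₂⟩ := intermediate_value_Icc' hθ1 (hfg.mono (Icc_subset_Icc hθ0 le_rfl))
    ⟨by simpa [g] using hb, hxu⟩
  have hmem (t : ℝ) (ht : t ∈ Icc 0 1) (hft : f (g t) = u) :
      t ∈ g ⁻¹' convexHull ℝ (segment ℝ a b ∩ f ⁻¹' {u}) :=
    subset_convexHull ℝ _ ⟨hg ht, hft⟩
  exact ((convex_convexHull ℝ _).affine_preimage g).ordConnected.out
    (hmem t₁ ⟨ht₁.1, ht₁.2.trans hθ1⟩ hft₁) (hmem t₂ ⟨hθ0.trans ht₂.1, ht₂.2⟩ hft₂)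
    ⟨ht₁.2, ht₂.1⟩

theorem convex_setOf_le_rpow_mul_rpow {a b ℓ : ℝ} (ha : 0 < a) (hb : 0 < b) (hℓ : 0 < ℓ) :
    Convex ℝ {x : ℝ × ℝ | (0 ≤ x.1 ∧ 0 ≤ x.2) ∧ ℓ ≤ x.1 ^ a * x.2 ^ b} := by
  have hlog (L : ℝ × ℝ →ₗ[ℝ] ℝ) (hL : MapsTo L (Ioi 0 ×ˢ Ioi 0) (Ioi 0)) :
      ConcaveOn ℝ (Ioi 0 ×ˢ Ioi 0) (fun x ↦ log (L x)) :=
    (strictConcaveOn_log_Ioi.concaveOn.comp_linearMap L).subset hL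
      ((convex_Ioi 0).prod (convex_Ioi 0))
  have hset : {x : ℝ × ℝ | (0 ≤ x.1 ∧ 0 ≤ x.2) ∧ ℓ ≤ x.1 ^ a * x.2 ^ b} =
      {x ∈ Ioi 0 ×ˢ Ioi 0 | log ℓ ≤ a • log x.1 + b • log x.2} := by
    ext x
    simp only [mem_ofPred_eq, mem_prod, mem_Ioi, smul_eq_mul]
    constructor
    · rintro ⟨⟨hx1, hx2⟩, h⟩
      have hx1' : 0 < x.1 := hx1.lt_of_ne' fun h0 ↦ by simp [h0, zero_rpow ha.ne'] at h; linarith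
      have hx2' : 0 < x.2 := hx2.lt_of_ne' fun h0 ↦ by simp [h0, zero_rpow hb.ne'] at h; linarith
      refine ⟨⟨hx1', hx2'⟩, ?_⟩
      rw [← log_rpow hx1', ← log_rpow hx2', ← log_mul (by positivity) (by positivity)]
      exact log_le_log hℓ h
    · rintro ⟨⟨hx1, hx2⟩, h⟩
      refine ⟨⟨hx1.le, hx2.le⟩, ?_⟩
      rw [← log_rpow hx1, ← log_rpow hx2, ← log_mul (by positivity) (by positivity)] at h
      exact (log_le_log_iff hℓ (by positivity)).1 h
  rw [hset]
  exact (((hlog (LinearMap.fst ℝ ℝ ℝ) fun _ hx ↦ hx.1).smul ha.le).add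
    ((hlog (LinearMap.snd ℝ ℝ ℝ) fun _ hx ↦ hx.2).smul hb.le)).convex_ge _

noncomputable def weightedGeomMean (s : ℝ) (x : ℝ × ℝ) : ℝ := x.1 ^ (1 - s) * x.2 ^ s

def orthantWedge (p q : ℝ) : Set (ℝ × ℝ) :=
  {x | (0 ≤ x.1 ∧ 0 ≤ x.2) ∧ p * x.1 ≤ x.2 ∧ x.2 ≤ q * x.1}

/-- The linear function equal to `weightedGeomMean s` at `(1, p)` and `(1, q)`: the factors of
`p ^ s` and `q ^ s` are the coordinates of `x` in the basis `(1, p)`, `(1, q)`. -/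
noncomputable def wedgeChord (s p q : ℝ) (x : ℝ × ℝ) : ℝ :=
  (q * x.1 - x.2) / (q - p) * p ^ s + (x.2 - p * x.1) / (q - p) * q ^ s

section Wedge

variable {s p q : ℝ}

theorem weightedGeomMean_nonneg {x : ℝ × ℝ} (hx : 0 ≤ x.1 ∧ 0 ≤ x.2) :
    0 ≤ weightedGeomMean s x :=
  mul_nonneg (rpow_nonneg hx.1 _) (rpow_nonneg hx.2 _)

theorem weightedGeomMean_smul_mk {t r : ℝ} (ht : 0 ≤ t) (hr : 0 ≤ r) :
    weightedGeomMean s (t • ((1 : ℝ), r)) = t * r ^ s := by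
  simp only [weightedGeomMean, Prod.smul_mk, smul_eq_mul, mul_one, mul_rpow ht hr]
  rw [← mul_assoc, ← rpow_add' ht (by simp), sub_add_cancel, rpow_one]

theorem continuous_weightedGeomMean (hs0 : 0 ≤ s) (hs1 : s ≤ 1) :
    Continuous (weightedGeomMean s) :=
  (continuous_fst.rpow_const fun _ ↦ Or.inr (by linarith)).mul
    (continuous_snd.rpow_const fun _ ↦ Or.inr hs0)

theorem convex_orthantWedge (p q : ℝ) : Convex ℝ (orthantWedge p q) := by
  rintro x ⟨⟨hx1, hx2⟩, hpx, hxq⟩ y ⟨⟨hy1, hy2⟩, hpy, hyq⟩ a b ha hb -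
  simp only [orthantWedge, mem_ofPred_eq, Prod.fst_add, Prod.snd_add, Prod.smul_fst,
    Prod.smul_snd, smul_eq_mul]
  refine ⟨⟨by positivity, by positivity⟩, ?_, ?_⟩ <;> nlinarith [mul_le_mul_of_nonneg_left hpx ha]

theorem smul_mk_mem_orthantWedge {r t : ℝ} (hp : 0 ≤ p) (hpr : p ≤ r) (hrq : r ≤ q)
    (ht : 0 ≤ t) : t • ((1 : ℝ), r) ∈ orthantWedge p q := by
  simp only [orthantWedge, Prod.smul_mk, smul_eq_mul, mul_one, mem_ofPred_eq]
  exact ⟨⟨ht, mul_nonneg ht (hp.trans hpr)⟩, by nlinarith, by nlinarith⟩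

theorem sub_div_smul_mk_add_sub_div_smul_mk (hpq : p ≠ q) (x : ℝ × ℝ) :
    ((q * x.1 - x.2) / (q - p)) • ((1 : ℝ), p) + ((x.2 - p * x.1) / (q - p)) • ((1 : ℝ), q)
      = x := by
  have : q - p ≠ 0 := sub_ne_zero.2 hpq.symm
  ext <;> simp only [Prod.smul_mk, smul_eq_mul, mul_one, Prod.mk_add_mk] <;> field_simp <;> ring

theorem isLinearMap_wedgeChord (s p q : ℝ) : IsLinearMap ℝ (wedgeChord s p q) :=
  ⟨fun x y ↦ by simp only [wedgeChord, Prod.fst_add, Prod.snd_add]; ring,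
    fun c x ↦ by simp only [wedgeChord, Prod.smul_fst, Prod.smul_snd, smul_eq_mul]; ring⟩

theorem wedgeChord_le_weightedGeomMean (hs0 : 0 ≤ s) (hs1 : s ≤ 1) (hp : 0 ≤ p) (hpq : p < q)
    {x : ℝ × ℝ} (hx : x ∈ orthantWedge p q) : wedgeChord s p q x ≤ weightedGeomMean s x := by
  obtain ⟨⟨hx1, hx2⟩, hpx, hxq⟩ := hx
  have hqp : 0 < q - p := sub_pos.2 hpq
  rcases hx1.eq_or_lt with h | h
  · have h2 : x.2 = 0 := by rw [← h] at hxq; linarith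
    simp only [wedgeChord, weightedGeomMean, ← h, h2, mul_zero, sub_self, zero_div, zero_mul,
      add_zero]
    positivity
  have hμ : 0 ≤ (q * x.1 - x.2) / ((q - p) * x.1) := div_nonneg (by linarith) (by positivity)
  have hν : 0 ≤ (x.2 - p * x.1) / ((q - p) * x.1) := div_nonneg (by linarith) (by positivity)
  have hconc := (concaveOn_rpow hs0 hs1).2 (mem_Ici.2 hp) (mem_Ici.2 (hp.trans hpq.le)) hμ hν
    (by field_simp; ring)
  have hmid : (q * x.1 - x.2) / ((q - p) * x.1) * p + (x.2 - p * x.1) / ((q - p) * x.1) * q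
      = x.2 / x.1 := by field_simp; ring
  simp only [smul_eq_mul, hmid] at hconc
  calc wedgeChord s p q x = x.1 * ((q * x.1 - x.2) / ((q - p) * x.1) * p ^ s
        + (x.2 - p * x.1) / ((q - p) * x.1) * q ^ s) := by
        simp only [wedgeChord]; field_simp
    _ ≤ x.1 * (x.2 / x.1) ^ s := by gcongr
    _ = weightedGeomMean s x := by
        rw [div_rpow hx2 h.le, weightedGeomMean, rpow_sub h, rpow_one]; field_simp

theorem convex_setOf_wedgeChord_le {ℓ u : ℝ} (hs0 : 0 < s) (hs1 : s < 1) (hℓ : 0 < ℓ) :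
    Convex ℝ {x | x ∈ orthantWedge p q ∧ ℓ ≤ weightedGeomMean s x ∧ wedgeChord s p q x ≤ u} := by
  have hY : {x | x ∈ orthantWedge p q ∧ ℓ ≤ weightedGeomMean s x ∧ wedgeChord s p q x ≤ u} =
      orthantWedge p q ∩ {x | (0 ≤ x.1 ∧ 0 ≤ x.2) ∧ ℓ ≤ x.1 ^ (1 - s) * x.2 ^ s} ∩
        {x | wedgeChord s p q x ≤ u} := by
    ext x
    simp only [orthantWedge, weightedGeomMean, mem_inter_iff, mem_ofPred_eq]
    tauto
  rw [hY]
  exact ((convex_orthantWedge p q).inter (convex_setOf_le_rpow_mul_rpow (sub_pos.2 hs1) hs0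
    hℓ)).inter (convex_halfSpace_le (isLinearMap_wedgeChord s p q) u)

theorem setOf_wedgeChord_le_subset_convexHull {ℓ u : ℝ} (hs0 : 0 < s) (hs1 : s < 1)
    (hp : 0 < p) (hpq : p < q) (hℓu : ℓ ≤ u) :
    {x | x ∈ orthantWedge p q ∧ ℓ ≤ weightedGeomMean s x ∧ wedgeChord s p q x ≤ u} ⊆
      convexHull ℝ
        {x | x ∈ orthantWedge p q ∧ ℓ ≤ weightedGeomMean s x ∧ weightedGeomMean s x ≤ u} := by
  have hq : 0 < q := hp.trans hpq
  rintro x ⟨hx, hℓx, hcx⟩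
  rcases le_total (weightedGeomMean s x) u with hxu | hxu
  · exact subset_convexHull ℝ _ ⟨hx, hℓx, hxu⟩
  obtain ⟨⟨hx1, hx2⟩, hpx, hxq⟩ := hx
  have hα : 0 ≤ (q * x.1 - x.2) / (q - p) := div_nonneg (by linarith) (by linarith)
  have hβ : 0 ≤ (x.2 - p * x.1) / (q - p) := div_nonneg (by linarith) (by linarith)
  have hc : 0 ≤ wedgeChord s p q x := by unfold wedgeChord; positivity
  have hseg := smul_add_smul_mem_segment hα hβ (rpow_pos_of_pos hp s) (rpow_pos_of_pos hq s)
    ((1 : ℝ), p) (1, q)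
  rw [sub_div_smul_mk_add_sub_div_smul_mk hpq.ne] at hseg
  have hends (r : ℝ) (hr : 0 < r) :
      weightedGeomMean s ((wedgeChord s p q x / r ^ s) • ((1 : ℝ), r)) ≤ u := by
    rwa [weightedGeomMean_smul_mk (by positivity) hr.le, div_mul_cancel₀ _ (by positivity)]
  refine convexHull_mono ?_ (mem_convexHull_segment_inter_preimage
    (continuous_weightedGeomMean hs0.le hs1.le).continuousOn hseg (hends p hp) (hends q hq) hxu)
  rintro y ⟨hy, rfl : weightedGeomMean s y = u⟩
  refine ⟨(convex_orthantWedge p q).segment_subset ?_ ?_ hy, hℓu, le_rfl⟩ <;>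
    exact smul_mk_mem_orthantWedge hp.le (by linarith) (by linarith) (by positivity)

theorem convexHull_setOf_weightedGeomMean_le {ℓ u : ℝ} (hs0 : 0 < s) (hs1 : s < 1)
    (hp : 0 < p) (hpq : p < q) (hℓ : 0 < ℓ) (hℓu : ℓ ≤ u) :
    convexHull ℝ {x | x ∈ orthantWedge p q ∧ ℓ ≤ weightedGeomMean s x ∧ weightedGeomMean s x ≤ u}
      = {x | x ∈ orthantWedge p q ∧ ℓ ≤ weightedGeomMean s x ∧ wedgeChord s p q x ≤ u} := by
  refine (convexHull_min ?_ (convex_setOf_wedgeChord_le hs0 hs1 hℓ)).antisymm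
    (setOf_wedgeChord_le_subset_convexHull hs0 hs1 hp hpq hℓu)
  rintro x ⟨hx, hℓx, hxu⟩
  exact ⟨hx, hℓx, (wedgeChord_le_weightedGeomMean hs0.le hs1.le hp.le hpq hx).trans hxu⟩

theorem sub_sub_mul_eq_rpow_neg_mul (hp : 0 < p) (hq : 0 < q) :
    q ^ (1 - s) - p ^ (1 - s) - (q ^ (-s) - p ^ (-s)) * p = q ^ (-s) * (q - p) := by
  rw [sub_eq_add_neg 1 s, rpow_add hp, rpow_add hq, rpow_one, rpow_one]
  ring

theorem wedgeChord_eq_mul (hp : 0 < p) (hq : 0 < q) (hpq : p ≠ q) (x : ℝ × ℝ) :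
    wedgeChord s p q x = p ^ s / (q ^ (-s) * (q - p)) *
      ((q ^ (1 - s) - p ^ (1 - s)) * x.1 - (q ^ (-s) - p ^ (-s)) * x.2) := by
  have hqp : q - p ≠ 0 := sub_ne_zero.2 hpq.symm
  have := rpow_pos_of_pos hp s
  have := rpow_pos_of_pos hq s
  rw [sub_eq_add_neg 1 s, rpow_add hp, rpow_add hq, rpow_one, rpow_one, rpow_neg hp.le,
    rpow_neg hq.le, wedgeChord]
  field_simp
  ring

end Wedge

section Exponents

variable {a₁ a₂ c : ℝ} {x : ℝ × ℝ}

theorem rpow_mul_rpow_eq_weightedGeomMean_rpow (ha : 0 < a₁ + a₂) (hx : 0 ≤ x.1 ∧ 0 ≤ x.2) :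
    x.1 ^ a₁ * x.2 ^ a₂ = weightedGeomMean (a₂ / (a₁ + a₂)) x ^ (a₁ + a₂) := by
  rw [weightedGeomMean, mul_rpow (rpow_nonneg hx.1 _) (rpow_nonneg hx.2 _), ← rpow_mul hx.1,
    ← rpow_mul hx.2]
  congr 2 <;> field_simp; ring

theorem le_rpow_mul_rpow_iff (ha : 0 < a₁ + a₂) (hc : 0 ≤ c) (hx : 0 ≤ x.1 ∧ 0 ≤ x.2) :
    c ≤ x.1 ^ a₁ * x.2 ^ a₂ ↔ c ^ (a₁ + a₂)⁻¹ ≤ weightedGeomMean (a₂ / (a₁ + a₂)) x := by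
  rw [rpow_mul_rpow_eq_weightedGeomMean_rpow ha hx,
    rpow_inv_le_iff_of_pos hc (weightedGeomMean_nonneg hx) ha]

theorem rpow_mul_rpow_le_iff (ha : 0 < a₁ + a₂) (hc : 0 ≤ c) (hx : 0 ≤ x.1 ∧ 0 ≤ x.2) :
    x.1 ^ a₁ * x.2 ^ a₂ ≤ c ↔ weightedGeomMean (a₂ / (a₁ + a₂)) x ≤ c ^ (a₁ + a₂)⁻¹ := by
  rw [rpow_mul_rpow_eq_weightedGeomMean_rpow ha hx,
    le_rpow_inv_iff_of_pos (weightedGeomMean_nonneg hx) hc ha]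

end Exponents

/-- For `n = 2`, `conv(X ∩ W₁₂) = Y`. -/
theorem convexHull_X_inter_W12 (a₁ a₂ ℓ u p q β d₁ d₂ lam : ℝ)
    (ha₁ : 0 < a₁) (ha₂ : 0 < a₂) (hβ : β = a₁ + a₂)
    (hℓ : 0 < ℓ) (hℓu : ℓ < u) (hp : 0 < p) (hpq : p < q)
    (hd₁ : d₁ = q ^ (-(a₂ / β)) - p ^ (-(a₂ / β)))
    (hd₂ : d₂ = q ^ (a₁ / β) - p ^ (a₁ / β))
    (hlam : lam = p ^ a₂ / (d₂ - d₁ * p) ^ β) :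
    convexHull ℝ
      {x : ℝ × ℝ | (0 ≤ x.1 ∧ 0 ≤ x.2) ∧
        (ℓ ≤ x.1 ^ a₁ * x.2 ^ a₂ ∧ x.1 ^ a₁ * x.2 ^ a₂ ≤ u) ∧
        (p * x.1 ≤ x.2 ∧ x.2 ≤ q * x.1)} =
    {x : ℝ × ℝ | (0 ≤ x.1 ∧ 0 ≤ x.2) ∧
        (p * x.1 ≤ x.2 ∧ x.2 ≤ q * x.1) ∧
        ℓ ≤ x.1 ^ a₁ * x.2 ^ a₂ ∧
        d₂ * x.1 - d₁ * x.2 ≤ (u / lam) ^ (1 / β)} := by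
  subst hβ hd₁ hd₂ hlam
  have hβ : 0 < a₁ + a₂ := by positivity
  have hq : 0 < q := hp.trans hpq
  have hu : 0 < u := hℓ.trans hℓu
  have hs1 : a₂ / (a₁ + a₂) < 1 := (div_lt_one hβ).2 (by linarith)
  have hpa : p ^ a₂ = (p ^ (a₂ / (a₁ + a₂))) ^ (a₁ + a₂) := by
    rw [← rpow_mul hp.le]; congr 1; field_simp
  have hD : 0 < q ^ (-(a₂ / (a₁ + a₂))) * (q - p) := by have := sub_pos.2 hpq; positivity
  rw [show a₁ / (a₁ + a₂) = 1 - a₂ / (a₁ + a₂) by field_simp; ring,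
    sub_sub_mul_eq_rpow_neg_mul hp hq, hpa, ← div_rpow (by positivity) hD.le,
    div_rpow hu.le (by positivity), one_div, rpow_rpow_inv (by positivity) hβ.ne']
  -- now the bound reads `d₂ x₁ - d₁ x₂ ≤ u ^ β⁻¹ / κ` with `κ = p ^ s / (d₂ - d₁ p)`
  refine (congrArg (convexHull ℝ) ?_).trans
    ((convexHull_setOf_weightedGeomMean_le (ℓ := ℓ ^ (a₁ + a₂)⁻¹) (u := u ^ (a₁ + a₂)⁻¹)
      (by positivity) hs1 hp hpq (by positivity) (rpow_le_rpow hℓ.le hℓu.le (by positivity))).trans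
      ?_)
  all_goals
    ext x
    simp only [orthantWedge, mem_ofPred_eq, le_div_iff₀' (div_pos (rpow_pos_of_pos hp _) hD),
      ← wedgeChord_eq_mul hp hq hpq.ne]
    by_cases hx : 0 ≤ x.1 ∧ 0 ≤ x.2
    · simp only [le_rpow_mul_rpow_iff hβ hℓ.le hx, rpow_mul_rpow_le_iff hβ hu.le hx]; tauto
    · tauto
end
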